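/- arXiv:2003.06710 — 5 statements merged into one kernel-verified Lean document; each statement's English description precedes it below -/
import Mathlib

section
/- For any permutation w in S_n, the number of elements of the Bruhat interval [e,w] of length ℓ(w)-1 is at least the number of elements of [e,w] of length 1; equivalently, the number of minimal inversions of w is at least the size of the support of w (the number of simple reflections appearing in a reduced word for w). -/
namespace SG

variable {α : Type*} [LinearOrder α] [Fintype α]

/-- The length (number of inversions) of a permutation. -/
noncomputable def len (w : Equiv.Perm α) : ℕ :=
  Set.ncard {p : α × α | p.1 < p.2 ∧ w p.2 < w p.1}

/-- One step of the Bruhat order: multiply by a transposition, increasing length. -/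
def lt1 (u v : Equiv.Perm α) : Prop :=
  (∃ i j : α, i ≠ j ∧ v = u * Equiv.swap i j) ∧ len u < len v

/-- The (strong) Bruhat order. -/
def le (u v : Equiv.Perm α) : Prop := Relation.ReflTransGen lt1 u v

/-- `covers u v` means `v` covers `u` in Bruhat order: `u ≤ v` and `ℓ(u) + 1 = ℓ(v)`. -/
def covers (u v : Equiv.Perm α) : Prop := le u v ∧ len u + 1 = len v

/-- `(i, j)` is a minimal inversion of `w`. -/
def MinimalInversion (w : Equiv.Perm α) (i j : α) : Prop :=
  i < j ∧ w j < w i ∧ ¬ ∃ k, i < k ∧ k < j ∧ w j < w k ∧ w k < w i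

/-- `w` contains the pattern given by the values `π 0, …, π (m-1)`. -/
def Contains (w : Equiv.Perm α) {m : ℕ} (π : Fin m → ℕ) : Prop :=
  ∃ f : Fin m → α, StrictMono f ∧ ∀ a b : Fin m, π a < π b ↔ w (f a) < w (f b)

def Avoids (w : Equiv.Perm α) {m : ℕ} (π : Fin m → ℕ) : Prop := ¬ Contains w π

/-- The set of elements of length `k` in the Bruhat interval `[e, w]`. -/
def Pk (w : Equiv.Perm α) (k : ℕ) : Set (Equiv.Perm α) := {u | le u w ∧ len u = k}

/-- The number of elements of `[e, w]` covering `u`. -/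
noncomputable def udeg (w u : Equiv.Perm α) : ℕ := {v | le v w ∧ covers u v}.ncard

/-- The number of elements of `[e, w]` covered by `u`. -/
noncomputable def ddeg (w u : Equiv.Perm α) : ℕ := {v | le v w ∧ covers v u}.ncard

end SG

open SG Equiv

section Aux

variable {α : Type*} [LinearOrder α] [Fintype α]

/-- The finset of inversions of a permutation. -/
def invF (σ : Perm α) : Finset (α × α) :=
  Finset.univ.filter fun p => p.1 < p.2 ∧ σ p.2 < σ p.1

lemma mem_invF {σ : Perm α} {p q : α} :
    (p, q) ∈ invF σ ↔ p < q ∧ σ q < σ p := by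
  simp [invF]

lemma len_eq_card (σ : Perm α) : len σ = (invF σ).card := by
  rw [len, show {p : α × α | p.1 < p.2 ∧ σ p.2 < σ p.1} = ↑(invF σ) by
    ext p; simp [invF]]
  exact Set.ncard_coe_finset _

/-- The rearrangement map used for both counting lemmas. -/
def rmap (i j : α) (p : α × α) : α × α :=
  if Equiv.swap i j p.1 < Equiv.swap i j p.2 then (Equiv.swap i j p.1, Equiv.swap i j p.2) else p

lemma rmap_injOn {i j : α} {s : Finset (α × α)} (hs : ∀ p ∈ s, p.1 < p.2) :
    Set.InjOn (rmap i j) ↑s := by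
  intro x hx y hy hxy
  have hx1 : x.1 < x.2 := hs x (Finset.mem_coe.1 hx)
  have hy1 : y.1 < y.2 := hs y (Finset.mem_coe.1 hy)
  unfold rmap at hxy
  by_cases hx' : Equiv.swap i j x.1 < Equiv.swap i j x.2 <;>
    by_cases hy' : Equiv.swap i j y.1 < Equiv.swap i j y.2
  · rw [if_pos hx', if_pos hy'] at hxy
    have h1 := congrArg Prod.fst hxy
    have h2 := congrArg Prod.snd hxy
    simp only at h1 h2
    exact Prod.ext ((Equiv.swap i j).injective h1) ((Equiv.swap i j).injective h2)
  · rw [if_pos hx', if_neg hy'] at hxy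
    exfalso
    apply hy'
    rw [← hxy]
    simpa using hx1
  · rw [if_neg hx', if_pos hy'] at hxy
    exfalso
    apply hx'
    rw [hxy]
    simpa using hy1
  · rwa [if_neg hx', if_neg hy'] at hxy

lemma lemA {σ : Perm α} {i j : α} (hij : i < j) (h : σ i < σ j) :
    len σ < len (σ * Equiv.swap i j) := by
  classical
  set τ := Equiv.swap i j with hτ
  set v := σ * τ with hv
  have hvapp : ∀ x, v x = σ (τ x) := fun x => rfl
  have hττ : ∀ x, τ (τ x) = x := fun x => Equiv.swap_apply_self i j x
  have hτi : τ i = j := Equiv.swap_apply_left i j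
  have hτj : τ j = i := Equiv.swap_apply_right i j
  have hmaps : ∀ p ∈ invF σ, rmap i j p ∈ (invF v).erase (i, j) := by
    rintro ⟨p, q⟩ hp
    rw [mem_invF] at hp
    obtain ⟨hpq, hinv⟩ := hp
    unfold rmap
    by_cases hb : τ p < τ q
    · rw [if_pos hb]
      refine Finset.mem_erase.2 ⟨?_, mem_invF.2 ⟨hb, ?_⟩⟩
      · intro heq
        have h1 : τ p = i := congrArg Prod.fst heq
        have h2 : τ q = j := congrArg Prod.snd heq
        have hp' : p = j := by rw [← hτi, ← h1, hττ]
        have hq' : q = i := by rw [← hτj, ← h2, hττ]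
        rw [hp', hq'] at hpq
        exact absurd (hpq.trans hij) (lt_irrefl _)
      · rw [hvapp, hvapp, hττ, hττ]; exact hinv
    · rw [if_neg hb]
      have hqp : τ q < τ p :=
        lt_of_le_of_ne (not_lt.1 hb) fun e => hpq.ne (τ.injective e.symm) |>.elim
      refine Finset.mem_erase.2 ⟨?_, mem_invF.2 ⟨hpq, ?_⟩⟩
      · intro heq
        have hp' : p = i := congrArg Prod.fst heq
        have hq' : q = j := congrArg Prod.snd heq
        rw [hp', hq'] at hinv
        exact absurd h (not_lt.2 hinv.le)
      · rw [hvapp, hvapp]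
        by_cases hpi : p = i
        · by_cases hqj : q = j
          · rw [hpi, hqj] at hinv; exact absurd h (not_lt.2 hinv.le)
          · have hqi : q ≠ i := by rw [← hpi]; exact hpq.ne'
            have hτq : τ q = q := Equiv.swap_apply_of_ne_of_ne hqi hqj
            rw [hτq, hpi, hτi]
            rw [hpi] at hinv
            exact hinv.trans h
        · by_cases hpj : p = j
          · have hqj : q ≠ j := by rw [← hpj]; exact hpq.ne'
            have hqi : q ≠ i := fun e => (lt_irrefl i) (by
              have := hij.trans (hpj ▸ hpq); rwa [e] at this)
            have hτq : τ q = q := Equiv.swap_apply_of_ne_of_ne hqi hqj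
            exfalso
            rw [hτq, hpj, hτj] at hqp
            exact absurd (hij.trans (hpj ▸ hpq)) (not_lt.2 hqp.le)
          · have hτp : τ p = p := Equiv.swap_apply_of_ne_of_ne hpi hpj
            by_cases hqi : q = i
            · exfalso
              rw [hτp, hqi, hτi] at hqp
              exact absurd ((hqi ▸ hpq).trans hij) (not_lt.2 hqp.le)
            · by_cases hqj : q = j
              · rw [hτp, hqj, hτj]
                rw [hqj] at hinv
                exact h.trans hinv
              · have hτq : τ q = q := Equiv.swap_apply_of_ne_of_ne hqi hqj
                exfalso
                rw [hτp, hτq] at hqp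
                exact absurd hpq (not_lt.2 hqp.le)
  have hinj : Set.InjOn (rmap i j) ↑(invF σ) :=
    rmap_injOn (fun p hp => by
      rcases p with ⟨p, q⟩; exact (mem_invF.1 hp).1)
  have h1 : (invF σ).card ≤ ((invF v).erase (i, j)).card :=
    Finset.card_le_card_of_injOn (rmap i j) hmaps hinj
  have hmem : (i, j) ∈ invF v := by
    refine mem_invF.2 ⟨hij, ?_⟩
    rw [hvapp, hvapp, hτi, hτj]
    exact h
  rw [len_eq_card, len_eq_card]
  exact lt_of_le_of_lt h1 (Finset.card_erase_lt_of_mem hmem)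

lemma lemB {σ : Perm α} {i j : α} (hij : i < j) (h : σ i < σ j)
    (hmin : ∀ k, i < k → k < j → ¬(σ i < σ k ∧ σ k < σ j)) :
    len (σ * Equiv.swap i j) ≤ len σ + 1 := by
  classical
  set τ := Equiv.swap i j with hτ
  set v := σ * τ with hv
  have hvapp : ∀ x, v x = σ (τ x) := fun x => rfl
  have hττ : ∀ x, τ (τ x) = x := fun x => Equiv.swap_apply_self i j x
  have hτi : τ i = j := Equiv.swap_apply_left i j
  have hτj : τ j = i := Equiv.swap_apply_right i j
  have hmaps : ∀ p ∈ (invF v).erase (i, j), rmap i j p ∈ invF σ := by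
    rintro ⟨p, q⟩ hp
    obtain ⟨hne, hp⟩ := Finset.mem_erase.1 hp
    rw [mem_invF] at hp
    obtain ⟨hpq, hinv⟩ := hp
    rw [hvapp, hvapp] at hinv
    unfold rmap
    by_cases hb : τ p < τ q
    · rw [if_pos hb]
      exact mem_invF.2 ⟨hb, hinv⟩
    · rw [if_neg hb]
      have hqp : τ q < τ p :=
        lt_of_le_of_ne (not_lt.1 hb) fun e => hpq.ne (τ.injective e.symm) |>.elim
      refine mem_invF.2 ⟨hpq, ?_⟩
      by_cases hpi : p = i
      · by_cases hqj : q = j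
        · exact absurd (by rw [hpi, hqj]) hne
        · have hqi : q ≠ i := by rw [← hpi]; exact hpq.ne'
          have hτq : τ q = q := Equiv.swap_apply_of_ne_of_ne hqi hqj
          rw [hτq, hpi, hτi] at hinv
          have hiq : i < q := hpi ▸ hpq
          have hql : q < j := by rw [hτq, hpi, hτi] at hqp; exact hqp
          rw [hpi]
          rcases lt_or_ge (σ q) (σ i) with h' | h'
          · exact h'
          · exact absurd ⟨lt_of_le_of_ne h' (fun e => hqi (σ.injective e.symm)), hinv⟩
              (hmin q hiq hql)
      · by_cases hpj : p = j
        · have hqj : q ≠ j := by rw [← hpj]; exact hpq.ne'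
          have hqi : q ≠ i := fun e => (lt_irrefl i) (by
            have := hij.trans (hpj ▸ hpq); rwa [e] at this)
          have hτq : τ q = q := Equiv.swap_apply_of_ne_of_ne hqi hqj
          exfalso
          rw [hτq, hpj, hτj] at hqp
          exact absurd (hij.trans (hpj ▸ hpq)) (not_lt.2 hqp.le)
        · have hτp : τ p = p := Equiv.swap_apply_of_ne_of_ne hpi hpj
          by_cases hqi : q = i
          · exfalso
            rw [hτp, hqi, hτi] at hqp
            exact absurd ((hqi ▸ hpq).trans hij) (not_lt.2 hqp.le)
          · by_cases hqj : q = j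
            · rw [hτp, hqj, hτj] at hinv
              have hip : i < p := by rw [hτp, hqj, hτj] at hqp; exact hqp
              have hpl : p < j := hqj ▸ hpq
              rw [hqj]
              rcases lt_or_ge (σ j) (σ p) with h' | h'
              · exact h'
              · exact absurd ⟨hinv, lt_of_le_of_ne h' (fun e => hpj (σ.injective e))⟩
                  (hmin p hip hpl)
            · have hτq : τ q = q := Equiv.swap_apply_of_ne_of_ne hqi hqj
              exfalso
              rw [hτp, hτq] at hqp
              exact absurd hpq (not_lt.2 hqp.le)
  have hinj : Set.InjOn (rmap i j) ↑((invF v).erase (i, j)) :=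
    rmap_injOn (fun p hp => by
      rcases p with ⟨p, q⟩
      exact (mem_invF.1 (Finset.mem_erase.1 hp).2).1)
  have h1 : ((invF v).erase (i, j)).card ≤ (invF σ).card :=
    Finset.card_le_card_of_injOn (rmap i j) hmaps hinj
  have hmem : (i, j) ∈ invF v := by
    refine mem_invF.2 ⟨hij, ?_⟩
    rw [hvapp, hvapp, hτi, hτj]
    exact h
  rw [len_eq_card, len_eq_card]
  have h2 : ((invF v).erase (i, j)).card + 1 = (invF v).card :=
    Finset.card_erase_add_one hmem
  omega

lemma mul_swap_swap (σ : Perm α) (i j : α) :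
    σ * Equiv.swap i j * Equiv.swap i j = σ := by
  rw [mul_assoc, Equiv.swap_mul_self, mul_one]

lemma len_zero_eq_one {v : Perm α} (h : len v = 0) : v = 1 := by
  classical
  rw [len_eq_card] at h
  have hemp := Finset.card_eq_zero.1 h
  have hmono : StrictMono (v : α → α) := by
    intro a b hab
    rcases lt_trichotomy (v a) (v b) with h' | h' | h'
    · exact h'
    · exact absurd (v.injective h') hab.ne
    · exfalso
      have : (a, b) ∈ invF v := mem_invF.2 ⟨hab, h'⟩
      rw [hemp] at this
      exact absurd this (Finset.notMem_empty _)
  haveI hwf : WellFoundedLT α := inferInstance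
  have h1 : ∀ x, x ≤ v x := fun x => StrictMono.le_apply (β := α) hmono
  have hmono' : StrictMono (v.symm : α → α) := by
    intro a b hab
    rcases lt_trichotomy (v.symm a) (v.symm b) with h' | h' | h'
    · exact h'
    · exact absurd (v.symm.injective h') hab.ne
    · have := hmono h'
      rw [Equiv.apply_symm_apply, Equiv.apply_symm_apply] at this
      exact absurd hab (not_lt.2 this.le)
  have h2 : ∀ x, x ≤ v.symm x := fun x => StrictMono.le_apply (β := α) hmono'
  ext x
  have := h2 (v x)
  rw [Equiv.symm_apply_apply] at this
  simp only [Equiv.Perm.coe_one, id_eq]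
  exact le_antisymm this (h1 x)

/-- Crossing inversion at `a`. -/
def Cross (w : Perm α) (a : α) : Prop :=
  ∃ p q : α, p ≤ a ∧ a < q ∧ w q < w p

lemma cross_step' {a : α} {u : Perm α} {i j : α} (hij : i < j)
    (hlen : len u < len (u * Equiv.swap i j)) (hc : Cross u a) :
    Cross (u * Equiv.swap i j) a := by
  classical
  set v := u * Equiv.swap i j with hv
  have hvapp : ∀ x, v x = u (Equiv.swap i j x) := fun x => rfl
  have hvi : v i = u j := by rw [hvapp, Equiv.swap_apply_left]
  have hvj : v j = u i := by rw [hvapp, Equiv.swap_apply_right]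
  have huij : u i < u j := by
    rcases lt_trichotomy (u i) (u j) with h' | h' | h'
    · exact h'
    · exact absurd (u.injective h') hij.ne
    · exfalso
      have h2 : v i < v j := by rw [hvi, hvj]; exact h'
      have := lemA hij h2
      rw [hv, mul_swap_swap] at this
      exact absurd hlen (not_lt.2 this.le)
  obtain ⟨p, q, hpa, haq, hinv⟩ := hc
  have hpq : p < q := lt_of_le_of_lt hpa haq
  by_cases hqi : q = i
  · have hpi : p ≠ i := fun e => hpq.ne (e.trans hqi.symm)
    have hpj : p ≠ j := fun e => absurd (e ▸ hpq) (not_lt.2 ((hqi ▸ hij).le))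
    refine ⟨p, j, hpa, lt_trans (hqi ▸ haq) hij, ?_⟩
    rw [hvj, hvapp, Equiv.swap_apply_of_ne_of_ne hpi hpj]
    exact hqi ▸ hinv
  · by_cases hqj : q = j
    · by_cases hpi : p = i
      · exfalso
        rw [hpi, hqj] at hinv
        exact absurd huij (not_lt.2 hinv.le)
      · by_cases hpj : p = j
        · exact absurd (hpj.trans hqj.symm) hpq.ne
        · refine ⟨p, j, hpa, hqj ▸ haq, ?_⟩
          rw [hvj, hvapp, Equiv.swap_apply_of_ne_of_ne hpi hpj]
          exact huij.trans (hqj ▸ hinv)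
    · have hvq : v q = u q := by
        rw [hvapp, Equiv.swap_apply_of_ne_of_ne hqi hqj]
      by_cases hpi : p = i
      · refine ⟨p, q, hpa, haq, ?_⟩
        rw [hvq, hpi, hvi]
        exact (hpi ▸ hinv).trans huij
      · by_cases hpj : p = j
        · refine ⟨i, q, le_of_lt (lt_of_lt_of_le hij (hpj ▸ hpa)), haq, ?_⟩
          rw [hvq, hvi]
          rw [hpj] at hinv
          exact hinv
        · refine ⟨p, q, hpa, haq, ?_⟩
          rw [hvq, hvapp, Equiv.swap_apply_of_ne_of_ne hpi hpj]
          exact hinv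

lemma cross_step {a : α} {u v : Perm α} (h : lt1 u v) (hc : Cross u a) :
    Cross v a := by
  obtain ⟨⟨i, j, hne, hv⟩, hlen⟩ := h
  rcases hne.lt_or_gt with hij | hij
  · subst hv
    exact cross_step' hij hlen hc
  · rw [Equiv.swap_comm] at hv
    subst hv
    exact cross_step' hij hlen hc

lemma cross_le {a : α} {u w : Perm α} (h : le u w) (hc : Cross u a) :
    Cross w a := by
  induction h with
  | refl => exact hc
  | tail _ hstep ih => exact cross_step hstep ih

lemma len_one {u : Perm α} (h : len u = 1) :
    ∃ a b : α, a < b ∧ u = Equiv.swap a b ∧ ∀ k, a < k → k < b → False := by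
  classical
  rw [len_eq_card] at h
  obtain ⟨p, hp⟩ := Finset.card_eq_one.1 h
  obtain ⟨a, b⟩ := p
  have hmem : (a, b) ∈ invF u := by rw [hp]; exact Finset.mem_singleton_self _
  obtain ⟨hab, hinv⟩ := mem_invF.1 hmem
  have huniq : ∀ p' q' : α, (p', q') ∈ invF u → p' = a ∧ q' = b := by
    intro p' q' h'
    rw [hp, Finset.mem_singleton] at h'
    exact ⟨congrArg Prod.fst h', congrArg Prod.snd h'⟩
  have hgap : ∀ k, a < k → k < b → False := by
    intro k hak hkb
    rcases lt_trichotomy (u k) (u a) with h' | h' | h'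
    · obtain ⟨_, h2⟩ := huniq a k (mem_invF.2 ⟨hak, h'⟩)
      exact absurd (h2 ▸ hkb) (lt_irrefl _)
    · exact absurd (u.injective h') hak.ne'
    · obtain ⟨h1, _⟩ := huniq k b (mem_invF.2 ⟨hkb, hinv.trans h'⟩)
      exact absurd (h1 ▸ hak) (lt_irrefl _)
  refine ⟨a, b, hab, ?_, hgap⟩
  set v := u * Equiv.swap a b with hv
  have hva : v a = u b := by rw [hv]; simp [Equiv.Perm.mul_apply]
  have hvb : v b = u a := by rw [hv]; simp [Equiv.Perm.mul_apply]
  have hlt : len v < len (v * Equiv.swap a b) := by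
    apply lemA hab
    rw [hva, hvb]; exact hinv
  rw [hv, mul_swap_swap] at hlt
  rw [len_eq_card u, h] at hlt
  have hv0 : len v = 0 := by rw [hv]; omega
  have h1 := len_zero_eq_one hv0
  rw [hv] at h1
  calc u = u * (Equiv.swap a b * Equiv.swap a b) := by rw [Equiv.swap_mul_self, mul_one]
  _ = (u * Equiv.swap a b) * Equiv.swap a b := by rw [mul_assoc]
  _ = 1 * Equiv.swap a b := by rw [h1]
  _ = Equiv.swap a b := one_mul _

lemma cross_of_swap {a b : α} (hab : a < b) : Cross (Equiv.swap a b) a :=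
  ⟨a, b, le_refl a, hab, by
    rw [Equiv.swap_apply_left, Equiv.swap_apply_right]; exact hab⟩

/-- Candidate left endpoints. -/
def Aset (w : Perm α) (a : α) : Finset α :=
  Finset.univ.filter fun i => i ≤ a ∧ ∃ j, a < j ∧ w j < w i

noncomputable def iFun (w : Perm α) (a : α) : α :=
  if h : (Aset w a).Nonempty then (Aset w a).max' h else a

noncomputable def Bset (w : Perm α) (a : α) : Finset α :=
  Finset.univ.filter fun j => a < j ∧ w j < w (iFun w a)

noncomputable def jFun (w : Perm α) (a : α) : α :=
  if h : (Bset w a).Nonempty then (Bset w a).min' h else a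

lemma iFun_spec {w : Perm α} {a : α} (hc : Cross w a) :
    (iFun w a ≤ a ∧ ∃ j, a < j ∧ w j < w (iFun w a)) ∧
      (∀ i, i ≤ a → (∃ j, a < j ∧ w j < w i) → i ≤ iFun w a) := by
  classical
  obtain ⟨p, q, hpa, haq, hinv⟩ := hc
  have hne : (Aset w a).Nonempty := ⟨p, by
    simp only [Aset, Finset.mem_filter, Finset.mem_univ, true_and]
    exact ⟨hpa, q, haq, hinv⟩⟩
  have hieq : iFun w a = (Aset w a).max' hne := dif_pos hne
  constructor
  · have hm := (Aset w a).max'_mem hne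
    rw [← hieq] at hm
    simpa only [Aset, Finset.mem_filter, Finset.mem_univ, true_and] using hm
  · intro i hia hj
    rw [hieq]
    exact (Aset w a).le_max' i (by
      simp only [Aset, Finset.mem_filter, Finset.mem_univ, true_and]
      exact ⟨hia, hj⟩)

lemma jFun_spec {w : Perm α} {a : α} (hc : Cross w a) :
    (a < jFun w a ∧ w (jFun w a) < w (iFun w a)) ∧
      (∀ j, a < j → w j < w (iFun w a) → jFun w a ≤ j) := by
  classical
  obtain ⟨_, j0, hj0, hj0'⟩ := (iFun_spec hc).1
  have hne : (Bset w a).Nonempty := ⟨j0, by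
    simp only [Bset, Finset.mem_filter, Finset.mem_univ, true_and]
    exact ⟨hj0, hj0'⟩⟩
  have hjeq : jFun w a = (Bset w a).min' hne := dif_pos hne
  constructor
  · have hm := (Bset w a).min'_mem hne
    rw [← hjeq] at hm
    simpa only [Bset, Finset.mem_filter, Finset.mem_univ, true_and] using hm
  · intro j haj hwj
    rw [hjeq]
    exact (Bset w a).min'_le j (by
      simp only [Bset, Finset.mem_filter, Finset.mem_univ, true_and]
      exact ⟨haj, hwj⟩)

/-- The coatom of `[e, w]` associated to a support point `a`. -/
noncomputable def coatom (w : Perm α) (a : α) : Perm α :=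
  w * Equiv.swap (iFun w a) (jFun w a)

lemma coatom_mem {w : Perm α} {a : α} (hc : Cross w a) :
    coatom w a ∈ Pk w (len w - 1) := by
  classical
  obtain ⟨⟨hia, _⟩, himax⟩ := iFun_spec hc
  obtain ⟨⟨haj, hwji⟩, hjmin⟩ := jFun_spec hc
  set i := iFun w a with hi
  set j := jFun w a with hj
  have hij : i < j := lt_of_le_of_lt hia haj
  set σ := w * Equiv.swap i j with hσ
  have hσi : σ i = w j := by rw [hσ]; simp [Equiv.Perm.mul_apply]
  have hσj : σ j = w i := by rw [hσ]; simp [Equiv.Perm.mul_apply]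
  have hσlt' : len σ < len (σ * Equiv.swap i j) := by
    apply lemA hij
    rw [hσi, hσj]; exact hwji
  have hσw : σ * Equiv.swap i j = w := by rw [hσ, mul_swap_swap]
  have hσlt : len σ < len w := by rwa [hσw] at hσlt'
  have hmin : ∀ k, i < k → k < j → ¬(σ i < σ k ∧ σ k < σ j) := by
    intro k hik hkj hcon
    have hki : k ≠ i := hik.ne'
    have hkjne : k ≠ j := hkj.ne
    have hσk : σ k = w k := by
      rw [hσ]
      simp only [Equiv.Perm.mul_apply]
      rw [Equiv.swap_apply_of_ne_of_ne hki hkjne]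
    rw [hσi, hσj, hσk] at hcon
    obtain ⟨h1, h2⟩ := hcon
    rcases le_or_gt k a with hka | hka
    · exact absurd (himax k hka ⟨j, haj, h1⟩) (not_le.2 hik)
    · exact absurd (hjmin k hka h2) (not_le.2 hkj)
  have hupper : len w ≤ len σ + 1 := by
    have := lemB hij (by rw [hσi, hσj]; exact hwji) hmin
    rwa [hσw] at this
  have hlen : len σ = len w - 1 := by omega
  refine ⟨Relation.ReflTransGen.single ⟨⟨i, j, hij.ne, hσw.symm⟩, hσlt⟩, hlen⟩

lemma coatom_inj {w : Perm α} {a a' : α} (hc : Cross w a) (hc' : Cross w a')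
    (heq : coatom w a = coatom w a') : a = a' := by
  classical
  obtain ⟨⟨hia, _⟩, himax⟩ := iFun_spec hc
  obtain ⟨⟨haj, hwji⟩, hjmin⟩ := jFun_spec hc
  obtain ⟨⟨hia', _⟩, himax'⟩ := iFun_spec hc'
  obtain ⟨⟨haj', hwji'⟩, hjmin'⟩ := jFun_spec hc'
  have hij : iFun w a < jFun w a := lt_of_le_of_lt hia haj
  have hij' : iFun w a' < jFun w a' := lt_of_le_of_lt hia' haj'
  have hswap : Equiv.swap (iFun w a) (jFun w a) = Equiv.swap (iFun w a') (jFun w a') :=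
    mul_left_cancel (heq : w * _ = w * _)
  have hkey : iFun w a = iFun w a' ∧ jFun w a = jFun w a' := by
    have h1 : Equiv.swap (iFun w a) (jFun w a) (iFun w a') = jFun w a' := by
      rw [hswap, Equiv.swap_apply_left]
    by_cases hi : iFun w a' = iFun w a
    · rw [hi, Equiv.swap_apply_left] at h1
      exact ⟨hi.symm, h1⟩
    · by_cases hjc : iFun w a' = jFun w a
      · rw [hjc, Equiv.swap_apply_right] at h1
        exfalso
        rw [hjc, ← h1] at hij'
        exact absurd (hij.trans hij') (lt_irrefl _)
      · rw [Equiv.swap_apply_of_ne_of_ne hi hjc] at h1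
        exact absurd (h1 ▸ hij') (lt_irrefl _)
  obtain ⟨hieq, hjeq⟩ := hkey
  by_contra hne
  -- WLOG a < a'
  rcases Ne.lt_or_gt hne with hlt | hlt
  · -- a < a'
    have h1 : ¬ w a' < w (iFun w a) := fun hcon =>
      absurd (hjmin a' hlt hcon) (not_le.2 (hjeq ▸ haj'))
    have h2 : w (iFun w a) < w a' :=
      lt_of_le_of_ne (not_lt.1 h1) (fun e => (hlt.trans_le' hia).ne' (w.injective e.symm) |>.elim)
    have h3 : a' ≤ iFun w a' :=
      himax' a' (le_refl a') ⟨jFun w a', haj', by rw [← hjeq]; exact hwji.trans h2⟩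
    exact absurd (lt_of_le_of_lt (hieq ▸ h3) (hia.trans_lt hlt)) (lt_irrefl _)
  · -- a' < a (symmetric)
    have h1 : ¬ w a < w (iFun w a') := fun hcon =>
      absurd (hjmin' a hlt hcon) (not_le.2 (hjeq ▸ haj))
    have h2 : w (iFun w a') < w a :=
      lt_of_le_of_ne (not_lt.1 h1) (fun e => (hlt.trans_le' hia').ne' (w.injective e.symm) |>.elim)
    have h3 : a ≤ iFun w a :=
      himax a (le_refl a) ⟨jFun w a, haj, by rw [hjeq]; exact hwji'.trans h2⟩
    exact absurd (lt_of_le_of_lt (hieq ▸ h3) (hia'.trans_lt hlt)) (lt_irrefl _)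

/-- The canonical atom index: for a permutation of length one, the smaller moved point. -/
noncomputable def aFun [Nonempty α] (u : Perm α) : α :=
  if h : len u = 1 then (len_one h).choose else Classical.arbitrary α

lemma aFun_spec [Nonempty α] {u : Perm α} (h : len u = 1) :
    ∃ b, aFun u < b ∧ u = Equiv.swap (aFun u) b ∧ ∀ k, aFun u < k → k < b → False := by
  have he : aFun u = (len_one h).choose := dif_pos h
  rw [he]
  exact (len_one h).choose_spec

lemma aFun_cross [Nonempty α] {u w : Perm α} (h : len u = 1) (hle : le u w) :
    Cross w (aFun u) := by
  set a := aFun u with ha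
  obtain ⟨b, hab, hueq, -⟩ := aFun_spec h
  have hcu : Cross u a := by rw [hueq]; exact cross_of_swap hab
  exact cross_le hle hcu

lemma aFun_inj [Nonempty α] {u u' : Perm α} (h : len u = 1) (h' : len u' = 1)
    (heq : aFun u = aFun u') : u = u' := by
  obtain ⟨b, hab, hueq, hgap⟩ := aFun_spec h
  obtain ⟨b', hab', hueq', hgap'⟩ := aFun_spec h'
  rw [heq] at hueq hab hgap
  have hbb : b = b' := by
    rcases lt_trichotomy b b' with h1 | h1 | h1
    · exact (hgap' b hab h1).elim
    · exact h1
    · exact (hgap b' hab' h1).elim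
  rw [hbb] at hueq
  exact hueq.trans hueq'.symm

end Aux


theorem stmt1 {n : ℕ} (w : Equiv.Perm (Fin n)) :
    (Pk w 1).ncard ≤ (Pk w (len w - 1)).ncard := by
  classical
  rcases (Pk w 1).eq_empty_or_nonempty with he | hne
  · rw [he, Set.ncard_empty]; exact Nat.zero_le _
  obtain ⟨u₀, hu₀⟩ := hne
  obtain ⟨a₀, b₀, -, -, -⟩ := len_one hu₀.2
  haveI : Nonempty (Fin n) := ⟨a₀⟩
  set Mid : Set (Fin n) := {a | Cross w a} with hMid
  have hF1maps : ∀ u ∈ Pk w 1, aFun u ∈ Mid := fun u hu => aFun_cross hu.2 hu.1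
  have hF1inj : Set.InjOn aFun (Pk w 1) :=
    fun u hu u' hu' heq => aFun_inj hu.2 hu'.2 heq
  have hF2maps : ∀ a ∈ Mid, coatom w a ∈ Pk w (len w - 1) := fun a ha => coatom_mem ha
  have hF2inj : Set.InjOn (coatom w) Mid := fun a ha a' ha' heq => coatom_inj ha ha' heq
  calc (Pk w 1).ncard ≤ Mid.ncard :=
        Set.ncard_le_ncard_of_injOn aFun hF1maps hF1inj (Set.toFinite _)
    _ ≤ (Pk w (len w - 1)).ncard :=
        Set.ncard_le_ncard_of_injOn (coatom w) hF2maps hF2inj (Set.toFinite _)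
end

section
/- If w ∈ S_n contains the pattern 4231, then the number of elements of Bruhat length ℓ(w)-1 in the interval [e,w] is strictly greater than the number of elements of length 1 in [e,w]. -/
/-!
An element of length one in `[e, w]` is a transposition `(p q)` with `p ⋖ q` such that `w` does
not map `{x | x ≤ p}` into itself (`w` *crosses* `p`), and every minimal inversion `(p, q)` of `w`
gives the coatom `w (p q)`, because
`ℓ(w) = ℓ(w (i j)) + 2 #{k ∈ (i, j) | w j < w k < w i} + 1` for every inversion `(i, j)`.
To a crossing `a` assign the minimal inversion `(p, q)` where `q` is the first position after `a`
whose value drops below a value at or before `a`, and `p` is the last position at or before `a`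
whose value exceeds `w q`; this assignment is injective. An occurrence of `4231` shrinks to one,
`e < P < k < Q`, in which `(P, Q)` is a minimal inversion, and no crossing is assigned `(P, Q)`:
the value `w k` sits between `w P` and `w e`.
-/

theorem Equiv.Perm.apply_mem_iff_of_mapsTo {β : Type*} [Finite β] {s : Set β}
    {σ : Equiv.Perm β} (h : Set.MapsTo σ s s) (x : β) : σ x ∈ s ↔ x ∈ s :=
  ⟨fun hx => by simpa using Equiv.Perm.perm_symm_mapsTo_of_mapsTo σ h hx, fun hx => h hx⟩

namespace SG

open Equiv Finset

variable {α : Type*} [LinearOrder α]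

lemma swap_injOn_lt : Set.InjOn (fun pq : α × α => swap pq.1 pq.2) {pq | pq.1 < pq.2} := by
  rintro ⟨p, q⟩ (hpq : p < q) ⟨p', q'⟩ (hpq' : p' < q') h
  have hp := congrArg (· p) h
  have hq := congrArg (· q) h
  simp only [swap_apply_def] at hp hq
  split_ifs at hp hq <;> grind

/-- For `a ⋖ b` this is the condition `(a b) ≤ w` in Bruhat order. -/
def Crosses (w : Perm α) (a : α) : Prop := ∃ x ≤ a, a < w x

lemma crosses_swap {p q : α} (h : p < q) : Crosses (swap p q) p :=
  ⟨p, le_rfl, by rwa [swap_apply_left]⟩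

def CrossingInversion (w : Perm α) (a p q : α) : Prop :=
  p ≤ a ∧ a < q ∧ w q < w p ∧
    (∀ k, a < k → k < q → ∀ x ≤ a, w x < w k) ∧ ∀ k, p < k → k ≤ a → w k < w q

lemma CrossingInversion.minimalInversion {w : Perm α} {a p q : α}
    (h : CrossingInversion w a p q) : MinimalInversion w p q := by
  obtain ⟨hpa, haq, hwqp, hright, hleft⟩ := h
  refine ⟨hpa.trans_lt haq, hwqp, fun ⟨k, hpk, hkq, hwqk, hwkp⟩ => ?_⟩
  rcases le_or_gt k a with hka | hak
  · exact (hleft k hpk hka).not_gt hwqk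
  · exact (hright k hak hkq p hpa).not_gt hwkp

lemma CrossingInversion.unique {w : Perm α} {a a' p q : α} (h : CrossingInversion w a p q)
    (h' : CrossingInversion w a' p q) : a = a' := by
  suffices key : ∀ {b b'}, CrossingInversion w b p q → CrossingInversion w b' p q → ¬ b < b' from
    le_antisymm (not_lt.mp (key h' h)) (not_lt.mp (key h h'))
  rintro b b' ⟨hpb, -, hwqp, hright, -⟩ ⟨-, hb'q, -, -, hleft'⟩ hbb'
  exact (hwqp.trans ((hright b' hbb' hb'q p hpb).trans
    (hleft' b' (hpb.trans_lt hbb') le_rfl))).false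

lemma CrossingInversion.not_pattern {w : Perm α} {a e P k Q : α} (h : CrossingInversion w a P Q)
    (heP : e < P) (hPk : P < k) (hkQ : k < Q) (hwPk : w P < w k) (hwke : w k < w e) : False := by
  obtain ⟨hPa, haQ, hwQP, hright, hleft⟩ := h
  rcases lt_or_ge a k with hak | hka
  · exact (hright k hak hkQ e (heP.le.trans hPa)).not_gt hwke
  · exact (hleft k hPk hka).not_gt (hwQP.trans hwPk)

variable [Fintype α]

def invs (w : Perm α) : Finset (α × α) := {p | p.1 < p.2 ∧ w p.2 < w p.1}

lemma mem_invs {w : Perm α} {p : α × α} : p ∈ invs w ↔ p.1 < p.2 ∧ w p.2 < w p.1 :=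
  mem_filter_univ p

lemma len_eq_card_invs (w : Perm α) : len w = #(invs w) := by
  rw [len, Set.ncard_eq_toFinset_card']
  congr 1
  ext p
  simp [invs]

lemma len_eq_sum (w : Perm α) :
    (len w : ℤ) = ∑ p : α × α, if p.1 < p.2 ∧ w p.2 < w p.1 then 1 else 0 := by
  rw [len_eq_card_invs, invs, card_filter]
  push_cast
  rfl

/-- After reindexing by `τ`, only the pairs inverted by `τ` contribute to the difference. -/
lemma len_sub_len_mul_inv (w τ : Perm α) :
    (len w : ℤ) - len (w * τ⁻¹) = ∑ p ∈ invs τ, if w p.2 < w p.1 then 1 else -1 := by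
  set χ : α × α → ℤ := fun p => if w p.2 < w p.1 then 1 else 0
  set A : α × α → ℤ := fun p => if p.1 < p.2 ∧ τ p.2 < τ p.1 then 1 else 0
  have hmul : (len (w * τ⁻¹) : ℤ) =
      ∑ p : α × α, if τ p.1 < τ p.2 ∧ w p.2 < w p.1 then 1 else 0 := by
    rw [len_eq_sum]
    exact (Fintype.sum_equiv (τ.prodCongr τ) _ _ fun p => by simp).symm
  have hswap : ∑ p : α × α, A p.swap * χ p = ∑ p : α × α, A p * χ p.swap :=
    Fintype.sum_equiv (Equiv.prodComm α α) _ _ fun p => rfl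
  rw [len_eq_sum, hmul, ← sum_sub_distrib, invs, sum_filter]
  calc _ = ∑ p : α × α, (A p * χ p - A p.swap * χ p) := by
        refine sum_congr rfl fun ⟨x, y⟩ _ => ?_
        have : x ≠ y → τ x ≠ τ y := τ.injective.ne
        simp only [A, χ, Prod.swap]
        split_ifs <;> grind
    _ = _ := by
        rw [sum_sub_distrib, hswap, ← sum_sub_distrib]
        refine sum_congr rfl fun ⟨x, y⟩ _ => ?_
        have : x ≠ y → w x ≠ w y := w.injective.ne
        simp only [A, χ, Prod.swap]
        split_ifs <;> grind

lemma invs_swap {i j : α} (hij : i < j) :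
    invs (swap i j) = insert (i, j) (({k | i < k ∧ k < j} : Finset α).image (i, ·) ∪
      ({k | i < k ∧ k < j} : Finset α).image (·, j)) := by
  ext ⟨x, y⟩
  simp only [invs, mem_filter_univ, mem_insert, mem_union, mem_image, Prod.mk.injEq]
  simp only [swap_apply_def]
  split_ifs <;> grind

lemma sum_invs_swap {M : Type*} [AddCommMonoid M] (f : α × α → M) {i j : α} (hij : i < j) :
    ∑ p ∈ invs (swap i j), f p = f (i, j) + ∑ k with i < k ∧ k < j, (f (i, k) + f (k, j)) := by
  rw [invs_swap hij, sum_insert, sum_union, sum_image, sum_image, sum_add_distrib]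
  · simp
  · simp
  · simp only [disjoint_left, mem_image, mem_filter_univ]
    grind
  · simp

lemma len_eq_len_mul_swap_add {w : Perm α} {i j : α} (hij : i < j) (hw : w j < w i) :
    len w = len (w * swap i j) + 2 * #{k | i < k ∧ k < j ∧ w j < w k ∧ w k < w i} + 1 := by
  have key := len_sub_len_mul_inv w (swap i j)
  rw [swap_inv, sum_invs_swap _ hij, if_pos hw] at key
  have hterm : ∀ k ∈ ({k | i < k ∧ k < j} : Finset α),
      ((if w k < w i then 1 else -1) + (if w j < w k then 1 else -1) : ℤ) =
        2 * if w j < w k ∧ w k < w i then 1 else 0 := by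
    intro k hk
    obtain ⟨hik, hkj⟩ := (mem_filter_univ k).mp hk
    have hki : w k ≠ w i := w.injective.ne hik.ne'
    have hkj : w k ≠ w j := w.injective.ne hkj.ne
    split_ifs <;> grind
  rw [sum_congr rfl hterm, ← mul_sum, sum_boole, filter_filter] at key
  simp only [and_assoc] at key
  omega

lemma len_mul_swap_lt {w : Perm α} {i j : α} (hij : i < j) (hw : w j < w i) :
    len (w * swap i j) < len w := by
  have := len_eq_len_mul_swap_add hij hw
  omega

lemma len_lt_len_mul_swap {w : Perm α} {i j : α} (hij : i < j) (hw : w i < w j) :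
    len w < len (w * swap i j) := by
  simpa [mul_assoc] using len_mul_swap_lt (w := w * swap i j) hij (by simpa using hw)

lemma MinimalInversion.len_mul_swap_add_one {w : Perm α} {i j : α}
    (h : MinimalInversion w i j) : len (w * swap i j) + 1 = len w := by
  obtain ⟨hij, hw, hmin⟩ := h
  have hempty : #{k | i < k ∧ k < j ∧ w j < w k ∧ w k < w i} = 0 :=
    card_eq_zero.mpr (filter_eq_empty_iff.mpr fun k _ hk => hmin ⟨k, hk⟩)
  have := len_eq_len_mul_swap_add hij hw
  omega

lemma len_swap {i j : α} (hij : i < j) : len (swap i j) = 2 * #{k | i < k ∧ k < j} + 1 := by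
  rw [len_eq_card_invs, card_eq_sum_ones, sum_invs_swap _ hij, sum_const, smul_eq_mul]
  ring

lemma eq_one_of_len_eq_zero {w : Perm α} (h : len w = 0) : w = 1 := by
  have hmono : StrictMono w := fun a b hab => by
    refine (w.injective.ne hab.ne).lt_of_le (not_lt.mp fun hba => ?_)
    have : (a, b) ∈ invs w := mem_invs.mpr ⟨hab, hba⟩
    simp_all [len_eq_card_invs]
  ext x
  simpa using congrArg (· x)
    (Subsingleton.elim (hmono.orderIsoOfSurjective w w.surjective) (OrderIso.refl α))

lemma exists_covBy_eq_swap_of_len_eq_one {u : Perm α} (h : len u = 1) :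
    ∃ p q, p ⋖ q ∧ u = swap p q := by
  obtain ⟨⟨p, q⟩, hinvs⟩ := card_eq_one.mp (len_eq_card_invs u ▸ h)
  obtain ⟨hpq, hu⟩ : p < q ∧ u q < u p := mem_invs.mp (hinvs ▸ mem_singleton_self (p, q))
  have hlen := len_eq_len_mul_swap_add hpq hu
  have hswap : u = swap p q :=
    (mul_eq_one_iff_eq_inv.mp (eq_one_of_len_eq_zero (by omega))).trans (swap_inv p q)
  have hbetween : ({k | p < k ∧ k < q} : Finset α) = ∅ := by
    have := len_swap hpq
    rw [← hswap, h] at this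
    exact card_eq_zero.mp (by omega)
  exact ⟨p, q, ⟨hpq, fun k hpk hkq => filter_eq_empty_iff.mp hbetween (mem_univ k) ⟨hpk, hkq⟩⟩,
    hswap⟩

lemma not_crosses_iff {w : Perm α} {a : α} : ¬ Crosses w a ↔ ∀ x, w x ≤ a ↔ x ≤ a := by
  refine ⟨fun h => Perm.apply_mem_iff_of_mapsTo (s := Set.Iic a) fun x hx => ?_,
    fun h ⟨x, hx, hwx⟩ => ?_⟩
  · exact not_lt.mp fun hwx => h ⟨x, hx, hwx⟩
  · exact ((h x).mpr hx).not_gt hwx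

lemma Crosses.exists_lt_apply_le {w : Perm α} {a : α} (h : Crosses w a) :
    ∃ q, a < q ∧ w q ≤ a := by
  by_contra! hq
  obtain ⟨x, hx, hwx⟩ := h
  exact hx.not_gt ((Perm.apply_mem_iff_of_mapsTo (s := Set.Ioi a) hq x).mp hwx)

lemma Crosses.of_lt1 {u v : Perm α} {a : α} (huv : lt1 u v) (hu : Crosses u a) :
    Crosses v a := by
  obtain ⟨⟨i, j, -, rfl⟩, hlen⟩ := huv
  by_contra hv
  obtain ⟨x, hx, hux⟩ := hu
  have hv' := not_crosses_iff.mp hv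
  have hvx : (u * swap i j) (swap i j x) = u x := by simp
  have hxy : x < swap i j x :=
    hx.trans_lt (not_le.mp fun h => ((hv' _).mpr h).not_gt (hvx ▸ hux))
  have hswap : swap i j = swap x (swap i j x) := by
    rcases (swap_apply_ne_self_iff.mp hxy.ne').2 with rfl | rfl
    · rw [swap_apply_left]
    · rw [swap_apply_right, swap_comm]
  have := len_lt_len_mul_swap hxy (((hv' x).mpr hx).trans_lt (hvx ▸ hux))
  rw [← hswap, mul_swap_mul_self] at this
  exact hlen.not_gt this

lemma Crosses.mono {u v : Perm α} {a : α} (huv : le u v) (hu : Crosses u a) : Crosses v a := by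
  induction huv with
  | refl => exact hu
  | tail _ hstep ih => exact ih.of_lt1 hstep

lemma Crosses.exists_crossingInversion {w : Perm α} {a : α} (h : Crosses w a) :
    ∃ p q, CrossingInversion w a p q := by
  obtain ⟨x, hx, hwx⟩ := h
  obtain ⟨y, hy, hwy⟩ := Crosses.exists_lt_apply_le ⟨x, hx, hwx⟩
  obtain ⟨q, hq, hqmin⟩ := ({q | a < q ∧ ∃ x ≤ a, w q < w x} : Finset α).exists_min_image id
    ⟨y, (mem_filter_univ y).mpr ⟨hy, x, hx, hwy.trans_lt hwx⟩⟩
  obtain ⟨haq, x', hx', hwq⟩ := (mem_filter_univ q).mp hq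
  obtain ⟨p, hp, hpmax⟩ := ({p | p ≤ a ∧ w q < w p} : Finset α).exists_max_image id
    ⟨x', (mem_filter_univ x').mpr ⟨hx', hwq⟩⟩
  obtain ⟨hpa, hwp⟩ := (mem_filter_univ p).mp hp
  refine ⟨p, q, hpa, haq, hwp, fun k hak hkq z hz => ?_, fun k hpk hka => ?_⟩
  · refine (w.injective.ne (hz.trans_lt hak).ne).lt_of_le (not_lt.mp fun hwk => ?_)
    exact hkq.not_ge (hqmin k ((mem_filter_univ k).mpr ⟨hak, z, hz, hwk⟩))
  · refine (w.injective.ne (hka.trans_lt haq).ne).lt_of_le (not_lt.mp fun hwk => ?_)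
    exact hpk.not_ge (hpmax k ((mem_filter_univ k).mpr ⟨hka, hwk⟩))

lemma ncard_Pk_one_le (w : Perm α) :
    (Pk w 1).ncard ≤ {pq : α × α | pq.1 ⋖ pq.2 ∧ Crosses w pq.1}.ncard := by
  refine (Set.ncard_le_ncard ?_ (Set.toFinite _)).trans
    (Set.ncard_image_le (f := fun pq : α × α => swap pq.1 pq.2) (Set.toFinite _))
  rintro u ⟨hle, hlen⟩
  obtain ⟨p, q, hpq, rfl⟩ := exists_covBy_eq_swap_of_len_eq_one hlen
  exact ⟨(p, q), ⟨hpq, (crosses_swap hpq.lt).mono hle⟩, rfl⟩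

lemma ncard_minimalInversions_le (w : Perm α) :
    {pq : α × α | MinimalInversion w pq.1 pq.2}.ncard ≤ (Pk w (len w - 1)).ncard := by
  refine Set.ncard_le_ncard_of_injOn (fun pq => w * swap pq.1 pq.2) (fun ⟨p, q⟩ h => ?_)
    (fun pq hpq pq' hpq' heq => swap_injOn_lt hpq.1 hpq'.1 (mul_left_cancel heq)) (Set.toFinite _)
  have hlen := h.len_mul_swap_add_one
  exact ⟨.single ⟨⟨p, q, h.1.ne, (mul_swap_mul_self p q w).symm⟩, by omega⟩, by omega⟩

lemma ncard_crossings_lt {w : Perm α} {e P k Q : α} (hPQ : MinimalInversion w P Q) (heP : e < P)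
    (hPk : P < k) (hkQ : k < Q) (hwPk : w P < w k) (hwke : w k < w e) :
    {pq : α × α | pq.1 ⋖ pq.2 ∧ Crosses w pq.1}.ncard <
      {pq : α × α | MinimalInversion w pq.1 pq.2}.ncard := by
  choose! p q hpq using fun a (h : Crosses w a) => h.exists_crossingInversion
  calc {pq : α × α | pq.1 ⋖ pq.2 ∧ Crosses w pq.1}.ncard
      ≤ ({pq : α × α | MinimalInversion w pq.1 pq.2} \ {(P, Q)}).ncard := by
        refine Set.ncard_le_ncard_of_injOn (fun ab => (p ab.1, q ab.1)) ?_ ?_ (Set.toFinite _)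
        · rintro ⟨a, b⟩ ⟨-, ha⟩
          refine ⟨(hpq a ha).minimalInversion, fun heq => ?_⟩
          obtain ⟨hP, hQ⟩ := Prod.mk.inj heq
          exact (hP ▸ hQ ▸ hpq a ha).not_pattern heP hPk hkQ hwPk hwke
        · rintro ⟨a, b⟩ ⟨hab, ha⟩ ⟨a', b'⟩ ⟨hab', ha'⟩ heq
          obtain ⟨hp, hq⟩ := Prod.mk.inj heq
          obtain rfl : a = a' := (hpq a ha).unique (hp ▸ hq ▸ hpq a' ha')
          exact congrArg (a, ·) (hab.unique_right hab')
    _ < {pq : α × α | MinimalInversion w pq.1 pq.2}.ncard :=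
        Set.ncard_sdiff_singleton_lt_of_mem hPQ (Set.toFinite _)

/-- Choose `P` as large as possible, then `Q` as small as possible. -/
lemma exists_minimalInversion_of_pattern {w : Perm α} {e P k Q : α} (heP : e < P) (hPk : P < k)
    (hkQ : k < Q) (hwQP : w Q < w P) (hwPk : w P < w k) :
    ∃ P Q, e < P ∧ P < k ∧ k < Q ∧ w P < w k ∧ MinimalInversion w P Q := by
  obtain ⟨⟨P', Q₀⟩, hPQ₀, hmax⟩ := ({pq | e < pq.1 ∧ pq.1 < k ∧ k < pq.2 ∧ w pq.2 < w pq.1 ∧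
    w pq.1 < w k} : Finset (α × α)).exists_max_image Prod.fst
    ⟨(P, Q), (mem_filter_univ _).mpr ⟨heP, hPk, hkQ, hwQP, hwPk⟩⟩
  obtain ⟨Q', hQ', hmin⟩ := ({q | e < P' ∧ P' < k ∧ k < q ∧ w q < w P' ∧ w P' < w k} :
    Finset α).exists_min_image id
    ⟨Q₀, (mem_filter_univ Q₀).mpr ((mem_filter_univ (P', Q₀)).mp hPQ₀)⟩
  obtain ⟨heP', hP'k, hkQ', hwQ'P', hwP'k⟩ := (mem_filter_univ Q').mp hQ'
  refine ⟨P', Q', heP', hP'k, hkQ', hwP'k, hP'k.trans hkQ', hwQ'P',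
    fun ⟨m, hP'm, hmQ', hwQ'm, hwmP'⟩ => ?_⟩
  rcases lt_trichotomy m k with hmk | rfl | hkm
  · exact hP'm.not_ge <| hmax (m, Q') <| (mem_filter_univ _).mpr
      ⟨heP'.trans hP'm, hmk, hkQ', hwQ'm, hwmP'.trans hwP'k⟩
  · exact hwmP'.not_gt hwP'k
  · exact hmQ'.not_ge <| hmin m <| (mem_filter_univ m).mpr ⟨heP', hP'k, hkm, hwmP', hwP'k⟩

end SG

open SG Equiv


theorem stmt2 {n : ℕ} (w : Equiv.Perm (Fin n)) (h : Contains w ![4, 2, 3, 1]) :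
    (Pk w 1).ncard < (Pk w (len w - 1)).ncard := by
  obtain ⟨f, hf, hπ⟩ := h
  obtain ⟨P, Q, heP, hPk, hkQ, hwPk, hPQ⟩ :=
    exists_minimalInversion_of_pattern (hf (show (0 : Fin 4) < 1 by decide))
      (hf (show (1 : Fin 4) < 2 by decide)) (hf (show (2 : Fin 4) < 3 by decide))
      ((hπ 3 1).mp (by decide)) ((hπ 1 2).mp (by decide))
  calc (Pk w 1).ncard ≤ _ := ncard_Pk_one_le w
    _ < _ := ncard_crossings_lt hPQ heP hPk hkQ hwPk ((hπ 2 0).mp (by decide))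
    _ ≤ _ := ncard_minimalInversions_le w
end

section
/- If w ∈ S_n avoids the pattern 4231 and (p,q) and (q,r) are both minimal inversions of w (with p < q < r), then both w·t_{pq} and w·t_{qr} cover both w·t_{pq}·t_{qr} and w·t_{qr}·t_{pq} in the Bruhat order restricted to [e,w]. -/
open SG Equiv

section Helper

set_option linter.unusedSectionVars false

variable {α : Type*} [LinearOrder α] [Fintype α] [DecidableEq α]

/-- Auxiliary map realizing the bijection between inversions of `v * swap i j` and
inversions of `v` other than `(i, j)`. -/
def fm (i j : α) (p : α × α) : α × α :=
  if (i < p.1 ∧ p.1 < j) ∨ (i < p.2 ∧ p.2 < j) then p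
  else if Equiv.swap i j p.1 < Equiv.swap i j p.2
    then (Equiv.swap i j p.1, Equiv.swap i j p.2)
    else (Equiv.swap i j p.2, Equiv.swap i j p.1)

lemma swap_notmid (i j x : α) (hx : ¬(i < x ∧ x < j)) :
    ¬(i < Equiv.swap i j x ∧ Equiv.swap i j x < j) := by
  by_cases hxi : x = i
  · rw [hxi, Equiv.swap_apply_left]; exact fun h => absurd h.2 (lt_irrefl _)
  by_cases hxj : x = j
  · rw [hxj, Equiv.swap_apply_right]; exact fun h => absurd h.1 (lt_irrefl _)
  · rw [Equiv.swap_apply_of_ne_of_ne hxi hxj]; exact hx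

lemma else_sorted (i j : α) (hij : i < j) (a b : α) (hab : a < b)
    (ha : ¬(i < a ∧ a < j)) (hb : ¬(i < b ∧ b < j)) (hne : (a, b) ≠ (i, j)) :
    Equiv.swap i j a < Equiv.swap i j b := by
  by_cases hai : a = i
  · have hbj : b ≠ j := fun h => hne (by rw [hai, h])
    have hbi : b ≠ i := by rw [← hai]; exact ne_of_gt hab
    rw [hai, Equiv.swap_apply_left, Equiv.swap_apply_of_ne_of_ne hbi hbj]
    have hib : i < b := hai ▸ hab
    rcases lt_trichotomy b j with h | h | h
    · exact absurd ⟨hib, h⟩ hb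
    · exact absurd h hbj
    · exact h
  by_cases haj : a = j
  · have hjb : j < b := haj ▸ hab
    have hbi : b ≠ i := ne_of_gt (hij.trans hjb)
    have hbj : b ≠ j := ne_of_gt hjb
    rw [haj, Equiv.swap_apply_right, Equiv.swap_apply_of_ne_of_ne hbi hbj]
    exact hij.trans hjb
  by_cases hbi : b = i
  · rw [hbi, Equiv.swap_apply_left, Equiv.swap_apply_of_ne_of_ne hai haj]
    exact (hbi ▸ hab).trans hij
  by_cases hbj : b = j
  · rw [hbj, Equiv.swap_apply_right, Equiv.swap_apply_of_ne_of_ne hai haj]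
    have haj' : a < j := hbj ▸ hab
    rcases lt_trichotomy a i with h | h | h
    · exact h
    · exact absurd h hai
    · exact absurd ⟨h, haj'⟩ ha
  · rw [Equiv.swap_apply_of_ne_of_ne hai haj, Equiv.swap_apply_of_ne_of_ne hbi hbj]
    exact hab

lemma fm_else (i j a b : α) (ha : ¬(i < a ∧ a < j)) (hb : ¬(i < b ∧ b < j))
    (hsort : Equiv.swap i j a < Equiv.swap i j b) :
    fm i j (a, b) = (Equiv.swap i j a, Equiv.swap i j b) := by
  simp only [fm]
  rw [if_neg (not_or.2 ⟨ha, hb⟩), if_pos hsort]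

lemma fm_spec (v : Equiv.Perm α) (i j : α) (hij : i < j) (hv : v j < v i)
    (hmin : ∀ k, i < k → k < j → ¬(v j < v k ∧ v k < v i))
    (a b : α) (hab : a < b) (hne : (a, b) ≠ (i, j)) :
    (fm i j (a, b)).1 < (fm i j (a, b)).2 ∧ fm i j (a, b) ≠ (i, j) ∧
      fm i j (fm i j (a, b)) = (a, b) ∧
      ((v * Equiv.swap i j) b < (v * Equiv.swap i j) a ↔
        v (fm i j (a, b)).2 < v (fm i j (a, b)).1) := by
  have hinj := v.injective
  by_cases hmid : (i < a ∧ a < j) ∨ (i < b ∧ b < j)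
  · have hfm : fm i j (a, b) = (a, b) := by simp [fm, hmid]
    refine ⟨by rw [hfm]; exact hab, by rw [hfm]; exact hne, by rw [hfm, hfm], ?_⟩
    rw [hfm]
    simp only [Equiv.Perm.mul_apply]
    by_cases hai : a = i
    · have hbj : b ≠ j := fun h => hne (by rw [hai, h])
      have hbmid : i < b ∧ b < j := by
        refine hmid.resolve_left ?_
        rw [hai]; exact fun h => absurd h.1 (lt_irrefl _)
      rw [hai, Equiv.swap_apply_left,
        Equiv.swap_apply_of_ne_of_ne (ne_of_gt hbmid.1) hbj]
      constructor
      · exact fun h => h.trans hv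
      · intro h
        have hnb : ¬ v j < v b := fun hh => hmin b hbmid.1 hbmid.2 ⟨hh, h⟩
        rcases lt_or_eq_of_le (not_lt.1 hnb) with h' | h'
        · exact h'
        · exact absurd (hinj h') hbj
    by_cases haj : a = j
    · exfalso
      rcases hmid with h | h
      · rw [haj] at h; exact absurd h.2 (lt_irrefl _)
      · rw [haj] at hab; exact absurd (hab.trans h.2) (lt_irrefl _)
    by_cases hbi : b = i
    · exfalso
      rcases hmid with h | h
      · rw [hbi] at hab; exact absurd (h.1.trans hab) (lt_irrefl _)
      · rw [hbi] at h; exact absurd h.1 (lt_irrefl _)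
    by_cases hbj : b = j
    · have hamid : i < a ∧ a < j := by
        refine hmid.resolve_right ?_
        rw [hbj]; exact fun h => absurd h.2 (lt_irrefl _)
      rw [hbj, Equiv.swap_apply_right, Equiv.swap_apply_of_ne_of_ne hai haj]
      constructor
      · exact fun h => hv.trans h
      · intro h
        have hna : ¬ v a < v i := fun hh => hmin a hamid.1 hamid.2 ⟨h, hh⟩
        rcases lt_or_eq_of_le (not_lt.1 hna) with h' | h'
        · exact h'
        · exact absurd (hinj h'.symm) hai
    · rw [Equiv.swap_apply_of_ne_of_ne hai haj, Equiv.swap_apply_of_ne_of_ne hbi hbj]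
  · push_neg at hmid
    have ha : ¬(i < a ∧ a < j) := fun h => absurd h.2 (not_lt.2 (hmid.1 h.1))
    have hb : ¬(i < b ∧ b < j) := fun h => absurd h.2 (not_lt.2 (hmid.2 h.1))
    have hsort := else_sorted i j hij a b hab ha hb hne
    have hfm := fm_else i j a b ha hb hsort
    have ha' := swap_notmid i j a ha
    have hb' := swap_notmid i j b hb
    have hsort' : Equiv.swap i j (Equiv.swap i j a) < Equiv.swap i j (Equiv.swap i j b) := by
      rw [Equiv.swap_apply_self, Equiv.swap_apply_self]; exact hab
    refine ⟨by rw [hfm]; exact hsort, ?_, ?_, ?_⟩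
    · rw [hfm]
      intro h
      have h1 : Equiv.swap i j a = i := congrArg Prod.fst h
      have h2 : Equiv.swap i j b = j := congrArg Prod.snd h
      have ha2 : a = j := by
        have := congrArg (Equiv.swap i j) h1
        rwa [Equiv.swap_apply_self, Equiv.swap_apply_left] at this
      have hb2 : b = i := by
        have := congrArg (Equiv.swap i j) h2
        rwa [Equiv.swap_apply_self, Equiv.swap_apply_right] at this
      rw [ha2, hb2] at hab
      exact absurd (hab.trans hij) (lt_irrefl _)
    · rw [hfm, fm_else i j _ _ ha' hb' hsort', Equiv.swap_apply_self, Equiv.swap_apply_self]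
    · rw [hfm]
      simp only [Equiv.Perm.mul_apply]

/-- Multiplying by the transposition of a minimal inversion decreases length by one. -/
lemma len_mul_swap (v : Equiv.Perm α) (i j : α) (hij : i < j) (hv : v j < v i)
    (hmin : ∀ k, i < k → k < j → ¬(v j < v k ∧ v k < v i)) :
    len (v * Equiv.swap i j) + 1 = len v := by
  classical
  set v' := v * Equiv.swap i j with hv'
  set S : Equiv.Perm α → Set (α × α) := fun u => {p : α × α | p.1 < p.2 ∧ u p.2 < u p.1}
    with hS
  have hlen : ∀ u : Equiv.Perm α, len u = (S u).ncard := fun u => rfl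
  have hij_mem : (i, j) ∈ S v := ⟨hij, hv⟩
  have hnotmem : ∀ p ∈ S v', p ≠ (i, j) := by
    rintro p hp rfl
    have : v' j < v' i := hp.2
    rw [hv'] at this
    simp only [Equiv.Perm.mul_apply, Equiv.swap_apply_left, Equiv.swap_apply_right] at this
    exact absurd (this.trans hv) (lt_irrefl _)
  have spec : ∀ p : α × α, p.1 < p.2 → p ≠ (i, j) →
      (fm i j p).1 < (fm i j p).2 ∧ fm i j p ≠ (i, j) ∧ fm i j (fm i j p) = p ∧
        (p ∈ S v' ↔ fm i j p ∈ S v) := by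
    rintro ⟨a, b⟩ hab hne
    obtain ⟨c1, c2, c3, c4⟩ := fm_spec v i j hij hv hmin a b hab hne
    refine ⟨c1, c2, c3, ?_⟩
    constructor
    · intro hp; exact ⟨c1, c4.1 hp.2⟩
    · intro hp; exact ⟨hab, c4.2 hp.2⟩
  have himg : S v = insert (i, j) (fm i j '' S v') := by
    ext q
    constructor
    · intro hq
      by_cases hqij : q = (i, j)
      · exact hqij ▸ Set.mem_insert _ _
      · obtain ⟨c1, c2, c3, _⟩ := spec q hq.1 hqij
        obtain ⟨d1, d2, d3, d4⟩ := spec (fm i j q) c1 c2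
        refine Set.mem_insert_iff.2 (Or.inr ⟨fm i j q, ?_, c3⟩)
        rw [d4, c3]
        exact hq
    · intro hq
      rcases Set.mem_insert_iff.1 hq with rfl | ⟨p, hp, rfl⟩
      · exact hij_mem
      · obtain ⟨c1, c2, c3, c4⟩ := spec p hp.1 (hnotmem p hp)
        exact c4.1 hp
  have hinj : Set.InjOn (fm i j) (S v') := by
    intro p hp p' hp' h
    obtain ⟨_, _, c3, _⟩ := spec p hp.1 (hnotmem p hp)
    obtain ⟨_, _, c3', _⟩ := spec p' hp'.1 (hnotmem p' hp')
    rw [← c3, ← c3', h]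
  have hnotin : (i, j) ∉ fm i j '' S v' := by
    rintro ⟨p, hp, hfp⟩
    obtain ⟨_, c2, _, _⟩ := spec p hp.1 (hnotmem p hp)
    exact c2 hfp
  rw [hlen, hlen, himg, Set.ncard_insert_of_notMem hnotin,
    Set.ncard_image_of_injOn hinj]

end Helper

lemma contains4231 {n : ℕ} (w : Equiv.Perm (Fin n)) (a b c d : Fin n)
    (hab : a < b) (hbc : b < c) (hcd : c < d)
    (v1 : w d < w b) (v2 : w b < w c) (v3 : w c < w a) :
    Contains w ![4, 2, 3, 1] := by
  have h1 : (w d).val < (w b).val := v1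
  have h2 : (w b).val < (w c).val := v2
  have h3 : (w c).val < (w a).val := v3
  refine ⟨![a, b, c, d], ?_, ?_⟩
  · rw [Fin.strictMono_iff_lt_succ]
    intro i
    fin_cases i <;> simpa using (by assumption : _)
  · intro x y
    fin_cases x <;> fin_cases y <;>
      simp <;> simp only [Fin.lt_def, Fin.le_def] <;> omega

theorem stmt3 {n : ℕ} (w : Equiv.Perm (Fin n)) (p q r : Fin n)
    (havoid : Avoids w ![4, 2, 3, 1])
    (h1 : MinimalInversion w p q) (h2 : MinimalInversion w q r) :
    covers (w * Equiv.swap p q * Equiv.swap q r) (w * Equiv.swap p q) ∧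
    covers (w * Equiv.swap q r * Equiv.swap p q) (w * Equiv.swap p q) ∧
    covers (w * Equiv.swap p q * Equiv.swap q r) (w * Equiv.swap q r) ∧
    covers (w * Equiv.swap q r * Equiv.swap p q) (w * Equiv.swap q r) := by
  obtain ⟨hpq, hwpq, hmin1⟩ := h1
  obtain ⟨hqr, hwqr, hmin2⟩ := h2
  have hpr : p < r := hpq.trans hqr
  have hwinj := w.injective
  have hpq_ne : p ≠ q := ne_of_lt hpq
  have hqr_ne : q ≠ r := ne_of_lt hqr
  have hpr_ne : p ≠ r := ne_of_lt hpr
  have hm1 : ∀ k, p < k → k < q → ¬(w q < w k ∧ w k < w p) := by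
    intro k hk1 hk2 hk3
    exact hmin1 ⟨k, hk1, hk2, hk3.1, hk3.2⟩
  have hm2 : ∀ k, q < k → k < r → ¬(w r < w k ∧ w k < w q) := by
    intro k hk1 hk2 hk3
    exact hmin2 ⟨k, hk1, hk2, hk3.1, hk3.2⟩
  have L1 : len (w * Equiv.swap p q) + 1 = len w := len_mul_swap w p q hpq hwpq hm1
  have L2 : len (w * Equiv.swap q r) + 1 = len w := len_mul_swap w q r hqr hwqr hm2
  -- values of w * swap p q at q, r and of w * swap q r at p, q
  have vpq_q : (w * Equiv.swap p q) q = w p := by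
    rw [Equiv.Perm.mul_apply, Equiv.swap_apply_right]
  have vpq_r : (w * Equiv.swap p q) r = w r := by
    rw [Equiv.Perm.mul_apply, Equiv.swap_apply_of_ne_of_ne hpr_ne.symm hqr_ne.symm]
  have vqr_p : (w * Equiv.swap q r) p = w p := by
    rw [Equiv.Perm.mul_apply, Equiv.swap_apply_of_ne_of_ne hpq_ne hpr_ne]
  have vqr_q : (w * Equiv.swap q r) q = w r := by
    rw [Equiv.Perm.mul_apply, Equiv.swap_apply_left]
  have L3 : len (w * Equiv.swap p q * Equiv.swap q r) + 1 = len (w * Equiv.swap p q) := by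
    apply len_mul_swap _ q r hqr
    · rw [vpq_q, vpq_r]
      exact hwqr.trans hwpq
    · intro k hqk hkr hk
      have hkp : k ≠ p := ne_of_gt (hpq.trans hqk)
      have hkq : k ≠ q := ne_of_gt hqk
      rw [vpq_q, vpq_r] at hk
      rw [Equiv.Perm.mul_apply, Equiv.swap_apply_of_ne_of_ne hkp hkq] at hk
      rcases lt_trichotomy (w k) (w q) with h | h | h
      · exact hmin2 ⟨k, hqk, hkr, hk.1, h⟩
      · exact hkq (hwinj h)
      · exact havoid (contains4231 w p q k r hpq hqk hkr hwqr h hk.2)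
  have L4 : len (w * Equiv.swap q r * Equiv.swap p q) + 1 = len (w * Equiv.swap q r) := by
    apply len_mul_swap _ p q hpq
    · rw [vqr_p, vqr_q]
      exact hwqr.trans hwpq
    · intro k hpk hkq hk
      have hkq' : k ≠ q := ne_of_lt hkq
      have hkr : k ≠ r := ne_of_lt (hkq.trans hqr)
      rw [vqr_p, vqr_q] at hk
      rw [Equiv.Perm.mul_apply, Equiv.swap_apply_of_ne_of_ne hkq' hkr] at hk
      rcases lt_trichotomy (w k) (w q) with h | h | h
      · exact havoid (contains4231 w p k q r hpk hkq hqr hk.1 h hwpq)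
      · exact hkq' (hwinj h)
      · exact hmin1 ⟨k, hpk, hkq, h, hk.2⟩
  -- group identities
  have hpr_eq1 : Equiv.swap p q * Equiv.swap q r * Equiv.swap p q = Equiv.swap p r := by
    have := Equiv.swap_mul_swap_mul_swap (x := r) (y := q) (z := p) hqr_ne.symm hpr_ne.symm
    rwa [Equiv.swap_comm q p, Equiv.swap_comm r q] at this
  have hpr_eq2 : Equiv.swap q r * Equiv.swap p q * Equiv.swap q r = Equiv.swap p r := by
    have := Equiv.swap_mul_swap_mul_swap (x := p) (y := q) (z := r) hpq_ne hpr_ne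
    rwa [Equiv.swap_comm r p] at this
  have e1 : w * Equiv.swap p q = (w * Equiv.swap p q * Equiv.swap q r) * Equiv.swap q r := by
    rw [mul_assoc (w * Equiv.swap p q), Equiv.swap_mul_self, mul_one]
  have e2 : w * Equiv.swap p q = (w * Equiv.swap q r * Equiv.swap p q) * Equiv.swap p r := by
    rw [← hpr_eq1]
    simp [mul_assoc, Equiv.swap_mul_self_mul]
  have e3 : w * Equiv.swap q r = (w * Equiv.swap p q * Equiv.swap q r) * Equiv.swap p r := by
    rw [← hpr_eq2]
    simp [mul_assoc, Equiv.swap_mul_self_mul]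
  have e4 : w * Equiv.swap q r = (w * Equiv.swap q r * Equiv.swap p q) * Equiv.swap p q := by
    rw [mul_assoc (w * Equiv.swap q r), Equiv.swap_mul_self, mul_one]
  have cov : ∀ u v' : Equiv.Perm (Fin n), ∀ i j : Fin n, i ≠ j →
      v' = u * Equiv.swap i j → len u + 1 = len v' → covers u v' := by
    intro u v' i j hne he hl
    refine ⟨Relation.ReflTransGen.single ⟨⟨i, j, hne, ?_⟩,
      lt_of_lt_of_eq (Nat.lt_succ_self _) hl⟩, hl⟩
    rw [he]
  refine ⟨cov _ _ q r hqr_ne e1 L3, cov _ _ p r hpr_ne e2 (by omega),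
    cov _ _ p r hpr_ne e3 (by omega), cov _ _ p q hpq_ne e4 L4⟩
end

section
/- Let W be a Coxeter group and suppose w = u·v with the supports of u and v disjoint (as subsets of the simple reflections). Then the Bruhat interval [e,w] is isomorphic as a poset to the product [e,u] × [e,v]. -/
namespace Cox

variable {B : Type*} {W : Type*} [Group W] {M : CoxeterMatrix B} (cs : CoxeterSystem M W)

/-- One step of Bruhat order: right-multiply by a reflection, increasing length. -/
def lt1 (u v : W) : Prop :=
  (∃ t : W, cs.IsReflection t ∧ v = u * t) ∧ cs.length u < cs.length v

/-- The (strong) Bruhat order on `W`. -/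
def le (u v : W) : Prop := Relation.ReflTransGen (lt1 cs) u v

/-- The support of `w`: the simple reflections lying below `w` in Bruhat order
(equivalently, appearing in any reduced word for `w`). -/
def supp (w : W) : Set B := {i | le cs (cs.simple i) w}

/-- The standard parabolic subgroup generated by the simple reflections in `K`. -/
def parab (K : Set B) : Subgroup W := Subgroup.closure (cs.simple '' K)

/-- `x` belongs to the parabolic quotient `W^K`: no right descents in `K`. -/
def InQuot (K : Set B) (x : W) : Prop :=
  ∀ i ∈ K, cs.length x < cs.length (x * cs.simple i)

/-- The left descent set of `v`. -/
def DescL (v : W) : Set B := {i | cs.length (cs.simple i * v) < cs.length v}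

/-- `x` is the longest element of the standard parabolic subgroup `W_K`. -/
def IsLongest (K : Set B) (x : W) : Prop :=
  x ∈ parab cs K ∧ ∀ y ∈ parab cs K, cs.length y ≤ cs.length x

end Cox

open Cox

/-!
Bruhat order is the subword order: `x ≤ w` iff `x` is the product of a subword of some (equivalently
every) reduced word for `w`. One direction is the strong exchange property, the other the lifting
property. If `supp u` and `supp v` are disjoint, elements below `u` and elements below `v` have
disjoint supports, so a product `a * b` of such elements determines `a` and `b`; this makes the
concatenation of reduced words for `u` and `v` reduced. A subword of that concatenation is a subword
of the first part followed by a subword of the second, hence `(a, b) ↦ a * b` is an order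
isomorphism `[e, u] × [e, v] ≃ [e, u * v]`.
-/

namespace Cox

open CoxeterSystem List
open scoped Classical

variable {B W : Type*} [Group W] {M : CoxeterMatrix B} (cs : CoxeterSystem M W)

local prefix:100 "s" => cs.simple
local prefix:100 "π" => cs.wordProd
local prefix:100 "ℓ" => cs.length

section StrongExchange

/- The action of `s i` on `W × ZMod 2` from Björner–Brenti (Thm. 1.4.3), with `W` in place of the
set of reflections. Along a word `ω` it adds to the second coordinate of `(t, ε)` the number of
occurrences of `t` in the right inversion sequence of `ω`; since the action factors through `W`,
this parity depends only on `π ω`, and that is what makes the strong exchange property work. -/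
noncomputable def simpleAct (i : B) : Function.End (W × ZMod 2) :=
  fun p => (s i * p.1 * s i, p.2 + if p.1 = s i then 1 else 0)

lemma simpleAct_smul (i : B) (p : W × ZMod 2) :
    simpleAct cs i • p = (s i * p.1 * s i, p.2 + if p.1 = s i then 1 else 0) := rfl

lemma simpleAct_mul_simpleAct_pow_smul (i j : B) (m : ℕ) (p : W × ZMod 2) :
    (simpleAct cs i * simpleAct cs j) ^ m • p =
      ((s i * s j) ^ m * p.1 * (s j * s i) ^ m,
        p.2 + ∑ l ∈ Finset.range (2 * m), if p.1 = s j * (s i * s j) ^ l then 1 else 0) := by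
  induction m generalizing p with
  | zero => simp
  | succ m ih =>
    obtain ⟨x, ε⟩ := p
    have conj_iff : ∀ l : ℕ, s i * (s j * x * s j) * s i = s j * (s i * s j) ^ l ↔
        x = s j * (s i * s j) ^ (l + 2) := by
      intro l
      have shift :
          s i * (s j * (s j * (s i * s j) ^ (l + 2)) * s j) * s i = s j * (s i * s j) ^ l := by
        rw [pow_succ, pow_succ']
        simp only [← mul_assoc, simple_mul_simple_self, one_mul, simple_mul_simple_cancel_right]
      rw [← shift]
      simp only [mul_left_inj, mul_right_inj]
    have h1 : s j * x * s j = s i ↔ x = s j * (s i * s j) ^ 1 := by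
      have unshift : s j * (s j * (s i * s j) ^ 1) * s j = s i := by
        simp only [pow_one, ← mul_assoc, simple_mul_simple_self, one_mul,
          simple_mul_simple_cancel_right]
      conv_lhs => rw [← unshift]
      simp only [mul_left_inj, mul_right_inj]
    rw [pow_succ, mul_smul, mul_smul, simpleAct_smul, simpleAct_smul, ih]
    refine Prod.ext ?_ ?_
    · rw [pow_succ (s i * s j) m, pow_succ' (s j * s i) m]
      simp only [mul_assoc]
    · simp only [conj_iff, h1]
      rw [show 2 * (m + 1) = 2 * m + 1 + 1 by ring, Finset.sum_range_succ', Finset.sum_range_succ']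
      simp only [pow_zero, mul_one]
      ring

lemma isLiftable_simpleAct : M.IsLiftable (simpleAct cs) := by
  intro i j
  refine funext fun p => ?_
  change ((simpleAct cs i * simpleAct cs j) ^ M i j) • p = (1 : Function.End (W × ZMod 2)) • p
  rw [one_smul, simpleAct_mul_simpleAct_pow_smul, simple_mul_simple_pow, simple_mul_simple_pow',
    one_mul, mul_one, two_mul, Finset.sum_range_add]
  simp only [pow_add, simple_mul_simple_pow, one_mul, CharTwo.add_self_eq_zero, add_zero]

noncomputable def reflRep : W →* Function.End (W × ZMod 2) :=
  cs.lift ⟨simpleAct cs, isLiftable_simpleAct cs⟩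

lemma reflRep_wordProd_smul (ω : List B) (t : W) (ε : ZMod 2) :
    reflRep cs (π ω) • (t, ε) = (π ω * t * (π ω)⁻¹, ε + (cs.rightInvSeq ω).count t) := by
  induction ω generalizing ε with
  | nil => simp
  | cons i ω ih =>
    have conj_iff : π ω * (t * (π ω)⁻¹) = s i ↔ (π ω)⁻¹ * (s i * π ω) = t := by
      constructor
      · rintro h
        rw [← h]
        group
      · rintro rfl
        group
    rw [wordProd_cons, map_mul, mul_smul, ih, reflRep, lift_apply_simple, simpleAct_smul]
    simp only [rightInvSeq, count_cons, beq_iff_eq, mul_inv_rev, inv_simple, mul_assoc, conj_iff]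
    push_cast
    rw [add_assoc]

noncomputable def invParity (w t : W) : ZMod 2 := (reflRep cs w • (t, 0)).2

lemma invParity_wordProd (ω : List B) (t : W) :
    invParity cs (π ω) t = (cs.rightInvSeq ω).count t := by
  rw [invParity, reflRep_wordProd_smul, zero_add]

lemma reflRep_smul (w t : W) (ε : ZMod 2) :
    reflRep cs w • (t, ε) = (w * t * w⁻¹, ε + invParity cs w t) := by
  obtain ⟨ω, rfl⟩ := cs.wordProd_surjective w
  rw [reflRep_wordProd_smul, invParity_wordProd]

lemma invParity_mul (x y t : W) :
    invParity cs (x * y) t = invParity cs y t + invParity cs x (y * t * y⁻¹) := by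
  rw [invParity, map_mul, mul_smul, reflRep_smul, reflRep_smul, invParity]
  simp

lemma invParity_one (t : W) : invParity cs 1 t = 0 := by
  simpa using invParity_wordProd cs [] t

lemma invParity_self {t : W} (ht : cs.IsReflection t) : invParity cs t t = 1 := by
  obtain ⟨x, i, rfl⟩ := ht
  set t := x * s i * x⁻¹
  have hconj : x⁻¹ * t * x⁻¹⁻¹ = s i := by simp [t, mul_assoc]
  have h_simple : invParity cs (s i) (s i) = 1 := by
    simpa using invParity_wordProd cs [i] (s i)
  have h_inv : invParity cs x⁻¹ t + invParity cs x (s i) = 0 := by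
    rw [← hconj, ← invParity_mul, mul_inv_cancel, invParity_one]
  calc invParity cs t t
      = invParity cs x⁻¹ t + invParity cs (x * s i) (s i) := by
        rw [← hconj, ← invParity_mul, hconj]
    _ = 1 + (invParity cs x⁻¹ t + invParity cs x (s i)) := by
        rw [invParity_mul, h_simple, mul_inv_cancel_right]
        ring
    _ = 1 := by rw [h_inv, add_zero]

lemma mem_rightInvSeq_of_invParity_eq_one {ω : List B} {t : W}
    (h : invParity cs (π ω) t = 1) : t ∈ cs.rightInvSeq ω := by
  rw [invParity_wordProd] at h
  by_contra hmem
  rw [count_eq_zero_of_not_mem hmem, Nat.cast_zero] at h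
  exact zero_ne_one h

lemma invParity_eq_one_iff {w t : W} (ht : cs.IsReflection t) :
    invParity cs w t = 1 ↔ ℓ (w * t) < ℓ w := by
  have length_lt : ∀ v, invParity cs v t = 1 → ℓ (v * t) < ℓ v := by
    intro v hv
    obtain ⟨ω, hω, rfl⟩ := cs.exists_isReduced v
    exact (cs.isRightInversion_of_mem_rightInvSeq hω (mem_rightInvSeq_of_invParity_eq_one cs hv)).2
  refine ⟨length_lt w, fun h => ?_⟩
  -- otherwise the cocycle identity makes the parity `1` at `w * t`, so `t` would shorten `w * t`
  by_contra hne
  have h0 : invParity cs w t = 0 := by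
    have zmod_two : ∀ a : ZMod 2, a ≠ 1 → a = 0 := by decide
    exact zmod_two _ hne
  have h1 : invParity cs (w * t) t = 1 := by
    rw [invParity_mul, invParity_self cs ht, ht.inv, ht.mul_self, one_mul, h0, add_zero]
  have := length_lt (w * t) h1
  rw [mul_assoc, ht.mul_self, mul_one] at this
  omega

theorem strong_exchange {ω : List B} {t : W} (ht : cs.IsReflection t)
    (h : ℓ (π ω * t) < ℓ (π ω)) : ∃ j < ω.length, π ω * t = π (ω.eraseIdx j) := by
  have hmem := mem_rightInvSeq_of_invParity_eq_one cs ((invParity_eq_one_iff cs ht).2 h)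
  obtain ⟨j, hj, rfl⟩ := List.mem_iff_getElem.mp hmem
  refine ⟨j, by simpa using hj, ?_⟩
  rw [← List.getD_eq_getElem _ 1, wordProd_mul_getD_rightInvSeq]

end StrongExchange

section Bruhat

lemma le_mul_of_length_lt {x t : W} (ht : cs.IsReflection t) (h : ℓ x < ℓ (x * t)) :
    le cs x (x * t) :=
  .single ⟨⟨t, ht, rfl⟩, h⟩

lemma mul_le_of_length_lt {x t : W} (ht : cs.IsReflection t) (h : ℓ (x * t) < ℓ x) :
    le cs (x * t) x := by
  have h' : ℓ (x * t) < ℓ (x * t * t) := by rwa [mul_assoc, ht.mul_self, mul_one]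
  simpa [mul_assoc, ht.mul_self] using le_mul_of_length_lt cs ht h'

lemma le_simple_mul {x : W} {i : B} (h : ℓ x < ℓ (s i * x)) : le cs x (s i * x) := by
  have ht : cs.IsReflection (x⁻¹ * s i * x) := by
    simpa using (cs.isReflection_simple i).conj x⁻¹
  have hx : x * (x⁻¹ * s i * x) = s i * x := by group
  rw [← hx] at h ⊢
  exact le_mul_of_length_lt cs ht h

lemma simple_mul_le {x : W} {i : B} (h : ℓ (s i * x) < ℓ x) : le cs (s i * x) x := by
  simpa using le_simple_mul cs (x := s i * x) (i := i) (by simpa using h)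

lemma wordProd_eraseIdx_le {ω : List B} (hω : cs.IsReduced ω) (j : ℕ) :
    le cs (π (ω.eraseIdx j)) (π ω) := by
  by_cases hj : j < ω.length
  · have hmem : (cs.rightInvSeq ω).getD j 1 ∈ cs.rightInvSeq ω := by
      rw [List.getD_eq_getElem _ 1 (by simpa using hj)]
      exact List.getElem_mem _
    rw [← wordProd_mul_getD_rightInvSeq]
    exact mul_le_of_length_lt cs (cs.isReflection_of_mem_rightInvSeq ω hmem)
      (cs.isRightInversion_of_mem_rightInvSeq hω hmem).2
  · rw [List.eraseIdx_of_length_le (not_lt.mp hj)]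
    exact .refl

theorem exists_reduced_sublist (ω : List B) : ∃ σ, σ <+ ω ∧ cs.IsReduced σ ∧ π σ = π ω := by
  induction ω using List.reverseRecOn with
  | nil => exact ⟨[], .refl _, by simp [CoxeterSystem.IsReduced], rfl⟩
  | append_singleton ω i ih =>
    obtain ⟨σ, hσω, hσ, hπ⟩ := ih
    rcases cs.length_mul_simple (π σ) i with hlen | hlen
    · refine ⟨σ ++ [i], hσω.append (.refl _), ?_, by rw [wordProd_append, wordProd_append, hπ]⟩
      rw [CoxeterSystem.IsReduced, wordProd_append, wordProd_singleton, hlen, hσ.eq, length_append,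
        length_singleton]
    · obtain ⟨j, hj, hexch⟩ := strong_exchange cs (ω := σ) (cs.isReflection_simple i) (by omega)
      refine ⟨σ.eraseIdx j, ((eraseIdx_sublist σ j).trans hσω).trans (sublist_append_left _ _),
        ?_, ?_⟩
      · rw [CoxeterSystem.IsReduced, ← hexch, length_eraseIdx_of_lt hj, ← hσ.eq]
        omega
      · rw [← hexch, wordProd_append, wordProd_singleton, hπ]

theorem exists_reduced_sublist_of_le {x : W} {ω : List B} (h : le cs x (π ω)) :
    ∃ σ, σ <+ ω ∧ cs.IsReduced σ ∧ π σ = x := by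
  induction h using Relation.ReflTransGen.head_induction_on with
  | refl => exact exists_reduced_sublist cs ω
  | head step _ ih =>
    obtain ⟨⟨t, ht, rfl⟩, hlen⟩ := step
    obtain ⟨σ, hσω, -, hσ⟩ := ih
    have hlen' : ℓ (π σ * t) < ℓ (π σ) := by
      rwa [hσ, mul_assoc, ht.mul_self, mul_one]
    obtain ⟨j, -, hexch⟩ := strong_exchange cs ht hlen'
    obtain ⟨τ, hτσ, hτ, hπτ⟩ := exists_reduced_sublist cs (σ.eraseIdx j)
    refine ⟨τ, (hτσ.trans (eraseIdx_sublist σ j)).trans hσω, hτ, ?_⟩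
    rw [hπτ, ← hexch, hσ, mul_assoc, ht.mul_self, mul_one]

lemma simple_mul_le_of_lt1 {z y : W} {i : B} (hzy : lt1 cs z y) (hy : ℓ (s i * y) < ℓ y) :
    le cs (s i * z) y := by
  obtain ⟨⟨t, ht, hyt⟩, hlen⟩ := hzy
  obtain ⟨ρ, hρ, hρy⟩ := cs.exists_isReduced (s i * y)
  have hy_word : y = π (i :: ρ) := by
    rw [wordProd_cons, ← hρy, simple_mul_simple_cancel_left]
  have hzy : z = y * t := by rw [hyt, mul_assoc, ht.mul_self, mul_one]
  obtain ⟨j, -, hexch⟩ := strong_exchange cs ht (by rwa [← hy_word, ← hzy])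
  have hz_eq : z = π ((i :: ρ).eraseIdx j) := by rw [hzy, hy_word, hexch]
  cases j with
  | zero =>
    rw [hz_eq, eraseIdx_cons_zero, ← hρy, simple_mul_simple_cancel_left]
    exact .refl
  | succ k =>
    rw [hz_eq, eraseIdx_cons_succ, wordProd_cons, simple_mul_simple_cancel_left]
    exact (wordProd_eraseIdx_le cs hρ k).trans (hρy ▸ simple_mul_le cs hy)

theorem lifting {x y : W} (h : le cs x y) (i : B) :
    (ℓ y < ℓ (s i * y) → le cs (s i * x) (s i * y)) ∧
      (ℓ (s i * y) < ℓ y → le cs (s i * x) y) := by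
  induction h with
  | refl => exact ⟨fun _ => .refl, simple_mul_le cs⟩
  | @tail z y _ hzy ih =>
    rcases cs.length_simple_mul z i with hz | hz
    · have hxz := ih.1 (by omega)
      refine ⟨fun hy => hxz.tail ?_, fun hy => hxz.trans (simple_mul_le_of_lt1 cs hzy hy)⟩
      obtain ⟨⟨t, ht, rfl⟩, hlen⟩ := hzy
      exact ⟨⟨t, ht, by rw [mul_assoc]⟩, by omega⟩
    · have hxy := (ih.2 (by omega)).tail hzy
      exact ⟨fun hy => hxy.trans (le_simple_mul cs hy), fun _ => hxy⟩

lemma length_lt_simple_mul_of_isReduced_cons {i : B} {ω : List B} (h : cs.IsReduced (i :: ω)) :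
    ℓ (π ω) < ℓ (s i * π ω) := by
  have := cs.length_wordProd_le ω
  have := h.eq
  rw [wordProd_cons, length_cons] at this
  omega

theorem le_of_sublist {σ ω : List B} (hω : cs.IsReduced ω) (h : σ <+ ω) : le cs (π σ) (π ω) := by
  induction h with
  | slnil => exact .refl
  | @cons σ ω i _ ih =>
    rw [wordProd_cons]
    exact (ih (by simpa using hω.drop 1)).trans
      (le_simple_mul cs (length_lt_simple_mul_of_isReduced_cons cs hω))
  | @cons_cons σ ω i _ ih =>
    rw [wordProd_cons, wordProd_cons]
    exact (lifting cs (ih (by simpa using hω.drop 1)) i).1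
      (length_lt_simple_mul_of_isReduced_cons cs hω)

lemma le_inv {x y : W} (h : le cs x y) : le cs x⁻¹ y⁻¹ := by
  induction h with
  | refl => exact .refl
  | @tail z _ _ step ih =>
    obtain ⟨⟨t, ht, rfl⟩, hlen⟩ := step
    refine ih.tail ⟨⟨z * t * z⁻¹, ht.conj z, by rw [mul_inv_rev, ht.inv]; group⟩, ?_⟩
    rwa [length_inv, length_inv]

end Bruhat

section Support

lemma mem_supp_iff {i : B} {x : W} : i ∈ supp cs x ↔ le cs (s i) x := Iff.rfl

lemma supp_subset_of_le {x y : W} (h : le cs x y) : supp cs x ⊆ supp cs y :=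
  fun _ hi => hi.trans h

lemma supp_inv (x : W) : supp cs x⁻¹ = supp cs x := by
  ext i
  simp only [mem_supp_iff]
  exact ⟨fun hi => by simpa using le_inv cs hi, fun hi => by simpa using le_inv cs hi⟩

lemma mem_supp_wordProd {ω : List B} (hω : cs.IsReduced ω) {i : B} (hi : i ∈ ω) :
    i ∈ supp cs (π ω) := by
  rw [mem_supp_iff, ← wordProd_singleton]
  exact le_of_sublist cs hω (singleton_sublist.mpr hi)

lemma exists_mem_simple_eq_of_mem_supp {ω : List B} {i : B} (hi : i ∈ supp cs (π ω)) :
    ∃ j ∈ ω, s i = s j := by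
  obtain ⟨σ, hσω, hσ, hπσ⟩ := exists_reduced_sublist_of_le cs hi
  have hlen : σ.length = 1 := by rw [← hσ.eq, hπσ, length_simple]
  obtain ⟨j, rfl⟩ := length_eq_one_iff.mp hlen
  exact ⟨j, hσω.subset (mem_singleton_self j), by simpa using hπσ.symm⟩

lemma supp_mul_subset (x y : W) : supp cs (x * y) ⊆ supp cs x ∪ supp cs y := by
  intro i hi
  obtain ⟨ω₁, hω₁, rfl⟩ := cs.exists_isReduced x
  obtain ⟨ω₂, hω₂, rfl⟩ := cs.exists_isReduced y
  rw [← wordProd_append] at hi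
  obtain ⟨j, hj, hij⟩ := exists_mem_simple_eq_of_mem_supp cs hi
  rcases mem_append.mp hj with hj | hj
  · exact .inl (show le cs (s i) _ from hij ▸ mem_supp_wordProd cs hω₁ hj)
  · exact .inr (show le cs (s i) _ from hij ▸ mem_supp_wordProd cs hω₂ hj)

lemma eq_one_of_supp_eq_empty {x : W} (h : supp cs x = ∅) : x = 1 := by
  obtain ⟨ω, hω, rfl⟩ := cs.exists_isReduced x
  cases ω with
  | nil => rfl
  | cons i ω =>
    have := mem_supp_wordProd cs hω (mem_cons_self (a := i) (l := ω))
    simp [h] at this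

end Support

section DisjointSupports

theorem mul_eq_mul_iff_of_disjoint {K J : Set B} (hKJ : Disjoint K J) {p p' q q' : W}
    (hp : supp cs p ⊆ K) (hp' : supp cs p' ⊆ K) (hq : supp cs q ⊆ J) (hq' : supp cs q' ⊆ J) :
    p * q = p' * q' ↔ p = p' ∧ q = q' := by
  refine ⟨fun h => ?_, fun ⟨hp, hq⟩ => hp ▸ hq ▸ rfl⟩
  have hd : p'⁻¹ * p = q' * q⁻¹ := by
    rw [inv_mul_eq_iff_eq_mul, ← mul_assoc, ← h, mul_inv_cancel_right]
  have hK : supp cs (p'⁻¹ * p) ⊆ K := by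
    refine (supp_mul_subset cs _ _).trans (Set.union_subset ?_ hp)
    rwa [supp_inv]
  have hJ : supp cs (p'⁻¹ * p) ⊆ J := by
    rw [hd]
    refine (supp_mul_subset cs _ _).trans (Set.union_subset hq' ?_)
    rwa [supp_inv]
  have hpp : p' = p := inv_mul_eq_one.mp (eq_one_of_supp_eq_empty cs
    (Set.subset_empty_iff.mp fun i hi => hKJ.ne_of_mem (hK hi) (hJ hi) rfl))
  subst hpp
  exact ⟨rfl, mul_left_cancel h⟩

lemma isReduced_append_of_disjoint {ω₁ ω₂ : List B} (hω₁ : cs.IsReduced ω₁)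
    (hω₂ : cs.IsReduced ω₂) (h : Disjoint (supp cs (π ω₁)) (supp cs (π ω₂))) :
    cs.IsReduced (ω₁ ++ ω₂) := by
  obtain ⟨σ, hσ, hσred, hπσ⟩ := exists_reduced_sublist cs (ω₁ ++ ω₂)
  obtain ⟨α, β, rfl, hα, hβ⟩ := sublist_append_iff.mp hσ
  rw [wordProd_append, wordProd_append] at hπσ
  obtain ⟨hπα, hπβ⟩ := (mul_eq_mul_iff_of_disjoint cs h
    (supp_subset_of_le cs (le_of_sublist cs hω₁ hα)) subset_rfl
    (supp_subset_of_le cs (le_of_sublist cs hω₂ hβ)) subset_rfl).mp hπσ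
  have hσlen := hσred.eq
  rw [wordProd_append, hπα, hπβ, length_append] at hσlen
  have hα_len : ℓ (π ω₁) ≤ α.length := hπα ▸ cs.length_wordProd_le α
  have hβ_len : ℓ (π ω₂) ≤ β.length := hπβ ▸ cs.length_wordProd_le β
  have := cs.length_mul_le (π ω₁) (π ω₂)
  rw [CoxeterSystem.IsReduced, wordProd_append, length_append, ← hω₁.eq, ← hω₂.eq]
  omega

theorem mul_le_mul_of_disjoint {a₁ a₂ b₁ b₂ : W} (h : Disjoint (supp cs b₁) (supp cs b₂))
    (h₁ : le cs a₁ b₁) (h₂ : le cs a₂ b₂) : le cs (a₁ * a₂) (b₁ * b₂) := by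
  obtain ⟨ω₁, hω₁, rfl⟩ := cs.exists_isReduced b₁
  obtain ⟨ω₂, hω₂, rfl⟩ := cs.exists_isReduced b₂
  obtain ⟨α₁, hα₁, -, rfl⟩ := exists_reduced_sublist_of_le cs h₁
  obtain ⟨α₂, hα₂, -, rfl⟩ := exists_reduced_sublist_of_le cs h₂
  rw [← wordProd_append, ← wordProd_append]
  exact le_of_sublist cs (isReduced_append_of_disjoint cs hω₁ hω₂ h) (hα₁.append hα₂)

theorem exists_mul_eq_of_le_mul {x b₁ b₂ : W} (h : le cs x (b₁ * b₂)) :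
    ∃ a₁ a₂, le cs a₁ b₁ ∧ le cs a₂ b₂ ∧ a₁ * a₂ = x := by
  obtain ⟨ω₁, hω₁, rfl⟩ := cs.exists_isReduced b₁
  obtain ⟨ω₂, hω₂, rfl⟩ := cs.exists_isReduced b₂
  rw [← wordProd_append] at h
  obtain ⟨σ, hσ, -, rfl⟩ := exists_reduced_sublist_of_le cs h
  obtain ⟨α, β, rfl, hα, hβ⟩ := sublist_append_iff.mp hσ
  exact ⟨π α, π β, le_of_sublist cs hω₁ hα, le_of_sublist cs hω₂ hβ, (wordProd_append ..).symm⟩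

theorem mul_le_mul_iff_of_disjoint {u v a₁ a₂ b₁ b₂ : W} (h : Disjoint (supp cs u) (supp cs v))
    (ha₁ : le cs a₁ u) (ha₂ : le cs a₂ v) (hb₁ : le cs b₁ u) (hb₂ : le cs b₂ v) :
    le cs (a₁ * a₂) (b₁ * b₂) ↔ le cs a₁ b₁ ∧ le cs a₂ b₂ := by
  refine ⟨fun hab => ?_, fun ⟨h₁, h₂⟩ => ?_⟩
  · obtain ⟨c₁, c₂, hc₁, hc₂, hc⟩ := exists_mul_eq_of_le_mul cs hab
    obtain ⟨rfl, rfl⟩ := (mul_eq_mul_iff_of_disjoint cs h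
      (supp_subset_of_le cs (hc₁.trans hb₁)) (supp_subset_of_le cs ha₁)
      (supp_subset_of_le cs (hc₂.trans hb₂)) (supp_subset_of_le cs ha₂)).mp hc
    exact ⟨hc₁, hc₂⟩
  · exact mul_le_mul_of_disjoint cs
      (h.mono (supp_subset_of_le cs hb₁) (supp_subset_of_le cs hb₂)) h₁ h₂

noncomputable def intervalProdEquiv {u v : W} (h : Disjoint (supp cs u) (supp cs v)) :
    {x // le cs x u} × {x // le cs x v} ≃ {x // le cs x (u * v)} :=
  Equiv.ofBijective (fun p => ⟨p.1.1 * p.2.1, mul_le_mul_of_disjoint cs h p.1.2 p.2.2⟩) <| by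
    refine ⟨fun p q hpq => ?_, fun x => ?_⟩
    · obtain ⟨h₁, h₂⟩ := (mul_eq_mul_iff_of_disjoint cs h
        (supp_subset_of_le cs p.1.2) (supp_subset_of_le cs q.1.2)
        (supp_subset_of_le cs p.2.2) (supp_subset_of_le cs q.2.2)).mp (congrArg Subtype.val hpq)
      exact Prod.ext (Subtype.ext h₁) (Subtype.ext h₂)
    · obtain ⟨a₁, a₂, h₁, h₂, hx⟩ := exists_mul_eq_of_le_mul cs x.2
      exact ⟨(⟨a₁, h₁⟩, ⟨a₂, h₂⟩), Subtype.ext hx⟩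

lemma intervalProdEquiv_apply {u v : W} (h : Disjoint (supp cs u) (supp cs v))
    (p : {x // le cs x u} × {x // le cs x v}) :
    (intervalProdEquiv cs h p).1 = p.1.1 * p.2.1 := rfl

end DisjointSupports
end Cox

theorem stmt5 {B W : Type*} [Group W] {M : CoxeterMatrix B} (cs : CoxeterSystem M W)
    (u v w : W) (hw : w = u * v) (hdisj : supp cs u ∩ supp cs v = ∅) :
    ∃ F : {x : W // le cs x w} ≃ {x : W // le cs x u} × {x : W // le cs x v},
      ∀ a b : {x : W // le cs x w},
        le cs a.1 b.1 ↔ (le cs (F a).1.1 (F b).1.1 ∧ le cs (F a).2.1 (F b).2.1) := by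
  subst hw
  have h : Disjoint (supp cs u) (supp cs v) := Set.disjoint_iff_inter_eq_empty.mpr hdisj
  refine ⟨(intervalProdEquiv cs h).symm, fun a b => ?_⟩
  obtain ⟨p, rfl⟩ := (intervalProdEquiv cs h).surjective a
  obtain ⟨q, rfl⟩ := (intervalProdEquiv cs h).surjective b
  rw [Equiv.symm_apply_apply, Equiv.symm_apply_apply, intervalProdEquiv_apply,
    intervalProdEquiv_apply]
  exact mul_le_mul_iff_of_disjoint cs h p.1.2 p.2.2 q.1.2 q.2.2
end

section
/- Let (W,S) be a Coxeter system and J, J' ⊆ S with W finite, and set w = w₀(J)·w₀(J∩J')·w₀(J'). Then in the parabolic decomposition of w with respect to J', one has w_{J'} = w₀(J') and w^{J'} = w₀(J)·w₀(J∩J'), and this product is length-additive. -/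
open Cox

namespace CoxeterMatrix

open Real Finsupp

variable {B : Type*} (M : CoxeterMatrix B)

/-- The Tits form `B(α_a, α_b)`. For `M a b = 0`, i.e. `m = ∞`, Lean's `π / 0 = 0` gives the usual
value `-1`. -/
noncomputable def cosForm (a b : B) : ℝ := -cos (π / M a b)

lemma cosForm_self (a : B) : M.cosForm a a = 1 := by simp [cosForm]

lemma cosForm_comm (a b : B) : M.cosForm a b = M.cosForm b a := by
  rw [cosForm, cosForm, M.symmetric]

noncomputable def rootForm (a : B) : (B →₀ ℝ) →ₗ[ℝ] ℝ :=
  linearCombination ℝ (fun b => M.cosForm b a)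

lemma rootForm_single (a b : B) : M.rootForm a (single b 1) = M.cosForm b a := by
  simp [rootForm]

noncomputable def geomRefl (a : B) : Module.End ℝ (B →₀ ℝ) :=
  LinearMap.id - (2 : ℝ) • (M.rootForm a).smulRight (single a 1)

lemma geomRefl_apply (a : B) (v : B →₀ ℝ) :
    M.geomRefl a v = v - (2 * M.rootForm a v) • single a 1 := by
  simp [geomRefl, mul_smul]

lemma geomRefl_of_rootForm_eq_zero {a : B} {v : B →₀ ℝ} (h : M.rootForm a v = 0) :
    M.geomRefl a v = v := by
  simp [geomRefl_apply, h]

lemma geomRefl_mul_self (a : B) : M.geomRefl a * M.geomRefl a = 1 := by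
  refine LinearMap.ext fun v => ?_
  have h : M.rootForm a (M.geomRefl a v) = -M.rootForm a v := by
    rw [geomRefl_apply, map_sub, map_smul, rootForm_single, cosForm_self, smul_eq_mul]
    ring
  simp only [Module.End.mul_apply, Module.End.one_apply]
  rw [geomRefl_apply, h, geomRefl_apply]
  module

noncomputable def dihedralRoot (a b : B) (n : ℤ) : B →₀ ℝ :=
  sin ((n + 1) * (π / M a b)) • single a 1 + sin (n * (π / M a b)) • single b 1

lemma geomRefl_mul_geomRefl_dihedralRoot (a b : B) (n : ℤ) :
    (M.geomRefl a * M.geomRefl b) (M.dihedralRoot a b n) = M.dihedralRoot a b (n + 2) := by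
  set θ := π / M a b
  have hab : M.cosForm a b = -cos θ := rfl
  have hba : M.cosForm b a = -cos θ := by rw [← cosForm_comm, hab]
  have step (x : ℝ) : sin (x + θ) = 2 * cos θ * sin x - sin (x - θ) := by
    rw [sin_add, sin_sub]; ring
  have h2 : sin ((n + 2) * θ) = 2 * cos θ * sin ((n + 1) * θ) - sin (n * θ) := by
    rw [show (n + 2) * θ = (n + 1) * θ + θ by ring, step, show (n + 1) * θ - θ = n * θ by ring]
  have h3 : sin ((n + 3) * θ) = 2 * cos θ * sin ((n + 2) * θ) - sin ((n + 1) * θ) := by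
    rw [show (n + 3) * θ = (n + 2) * θ + θ by ring, step,
      show (n + 2) * θ - θ = (n + 1) * θ by ring]
  simp only [dihedralRoot, Module.End.mul_apply, geomRefl_apply, map_add, map_sub, map_smul,
    rootForm_single, cosForm_self, hab, hba]
  push_cast
  rw [show (n + 2 + 1 : ℝ) = n + 3 by ring, h3, h2]
  module

lemma pow_geomRefl_mul_geomRefl_dihedralRoot (a b : B) (k : ℕ) (n : ℤ) :
    ((M.geomRefl a * M.geomRefl b) ^ k) (M.dihedralRoot a b n) =
      M.dihedralRoot a b (n + 2 * k) := by
  induction k with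
  | zero => simp
  | succ k ih =>
    rw [pow_succ', Module.End.mul_apply, ih, geomRefl_mul_geomRefl_dihedralRoot]
    push_cast
    ring_nf

lemma dihedralRoot_add_two_mul {a b : B} (hab : M a b ≠ 0) (n : ℤ) :
    M.dihedralRoot a b (n + 2 * M a b) = M.dihedralRoot a b n := by
  have hm : (M a b : ℝ) ≠ 0 := Nat.cast_ne_zero.mpr hab
  have (x : ℝ) : sin ((x + 2 * M a b) * (π / M a b)) = sin (x * (π / M a b)) := by
    rw [show (x + 2 * M a b) * (π / M a b) = x * (π / M a b) + (1 : ℤ) * (2 * π) by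
      push_cast; field_simp, sin_add_int_mul_two_pi]
  simp only [dihedralRoot]
  push_cast
  rw [show (n + 2 * M a b + 1 : ℝ) = (n + 1) + 2 * M a b by ring, this, this]

/-- For `m = M a b ≥ 2`, `r_a r_b` rotates the plane of `α_a, α_b` by `2π/m` (it shifts the roots
`dihedralRoot a b n` by two) and fixes the orthogonal complement of that plane, on which the form is
nondegenerate since `1 - cos² (π/m) ≠ 0`. -/
lemma geomRefl_isLiftable : M.IsLiftable M.geomRefl := by
  intro a b
  rcases eq_or_ne a b with rfl | hab
  · rw [M.diagonal, pow_one, geomRefl_mul_self]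
  rcases eq_or_ne (M a b) 0 with h0 | hm0
  · rw [h0, pow_zero]
  set m := M a b
  set θ := π / m
  have hm2 : (2 : ℝ) ≤ m := by
    have := M.off_diagonal a b hab
    exact_mod_cast (by omega : 2 ≤ m)
  have hsin : sin θ ≠ 0 := (sin_pos_of_pos_of_lt_pi (by positivity)
    ((div_lt_self pi_pos (by linarith)))).ne'
  set ρ := M.geomRefl a * M.geomRefl b
  have hR0 : M.dihedralRoot a b 0 = sin θ • single a 1 := by simp [dihedralRoot, θ, m]
  have hR1 : M.dihedralRoot a b (-1) = -(sin θ • single b 1) := by simp [dihedralRoot, θ, m]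
  have hfix (n : ℤ) : (ρ ^ m) (M.dihedralRoot a b n) = M.dihedralRoot a b n := by
    rw [pow_geomRefl_mul_geomRefl_dihedralRoot, dihedralRoot_add_two_mul M hm0]
  have hfa : (ρ ^ m) (single a 1) = single a 1 := by
    have := hfix 0
    rwa [hR0, map_smul, (smul_right_injective _ hsin).eq_iff] at this
  have hfb : (ρ ^ m) (single b 1) = single b 1 := by
    have := hfix (-1)
    rwa [hR1, map_neg, neg_inj, map_smul, (smul_right_injective _ hsin).eq_iff] at this
  refine LinearMap.ext fun v => ?_
  have hab' : M.cosForm a b = -cos θ := rfl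
  have hba' : M.cosForm b a = -cos θ := by rw [← cosForm_comm, hab']
  have hdet : 1 - cos θ ^ 2 ≠ 0 := by rw [← sin_sq]; positivity
  set x := (M.rootForm a v + cos θ * M.rootForm b v) / (1 - cos θ ^ 2)
  set y := (M.rootForm b v + cos θ * M.rootForm a v) / (1 - cos θ ^ 2)
  set v₀ := v - x • single a 1 - y • single b 1
  have hρv₀ : ρ v₀ = v₀ := by
    have ha : M.rootForm a v₀ = 0 := by
      simp only [v₀, x, y, map_sub, map_smul, rootForm_single, cosForm_self, hba', smul_eq_mul]
      field_simp
      ring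
    have hb : M.rootForm b v₀ = 0 := by
      simp only [v₀, x, y, map_sub, map_smul, rootForm_single, cosForm_self, hab', smul_eq_mul]
      field_simp
      ring
    rw [Module.End.mul_apply, geomRefl_of_rootForm_eq_zero M hb, geomRefl_of_rootForm_eq_zero M ha]
  have hv : v = x • single a 1 + y • single b 1 + v₀ := by module
  rw [hv, map_add, map_add, map_smul, map_smul, hfa, hfb, Module.End.pow_apply,
    Function.iterate_fixed hρv₀, Module.End.one_apply]

end CoxeterMatrix

lemma mul_mul_inv_eq_iff_eq_inv_mul_mul {G : Type*} [Group G] {g a b : G} :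
    g * a * g⁻¹ = b ↔ a = g⁻¹ * b * g := by
  constructor <;> rintro rfl <;> group

lemma ZMod.eq_zero_iff_ne_one_of_two (x : ZMod 2) : x = 0 ↔ x ≠ 1 := by
  revert x
  decide

namespace CoxeterSystem

variable {B W : Type*} [Group W] {M : CoxeterMatrix B} (cs : CoxeterSystem M W)

local prefix:100 "s" => cs.simple
local prefix:100 "π" => cs.wordProd
local prefix:100 "ℓ" => cs.length

theorem simple_injective : Function.Injective cs.simple := by
  intro i j h
  by_contra hij
  have hrefl : M.geomRefl i = M.geomRefl j := by
    simpa only [cs.lift_apply_simple M.geomRefl_isLiftable] using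
      congrArg (cs.lift ⟨_, M.geomRefl_isLiftable⟩) h
  have := congrArg (fun f => f (Finsupp.single i 1) i) hrefl
  simp [CoxeterMatrix.geomRefl_apply, CoxeterMatrix.rootForm_single, CoxeterMatrix.cosForm_self,
    hij] at this

section ReflectionCocycle

open scoped Classical

lemma simple_mul_mul_simple_eq_iff {i : B} {t u : W} :
    s i * t * s i = u ↔ t = s i * u * s i := by
  simpa only [inv_simple] using mul_mul_inv_eq_iff_eq_inv_mul_mul (g := s i)

noncomputable def parityPerm (i : B) : Equiv.Perm (W × ZMod 2) :=
  Function.Involutive.toPerm (fun p => (s i * p.1 * s i, p.2 + if p.1 = s i then 1 else 0)) <| by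
    rintro ⟨t, ε⟩
    have : s i * t * s i = s i ↔ t = s i := by
      rw [simple_mul_mul_simple_eq_iff, simple_mul_simple_self, one_mul]
    simp only [this]
    simp only [mul_assoc, simple_mul_simple_cancel_left, simple_mul_simple_self, mul_one]
    split_ifs <;> simp [add_assoc, CharTwo.add_self_eq_zero]

lemma parityPerm_apply (i : B) (t : W) (ε : ZMod 2) :
    cs.parityPerm i (t, ε) = (s i * t * s i, ε + if t = s i then 1 else 0) := rfl

lemma pow_parityPerm_mul_parityPerm_apply (i j : B) (k : ℕ) (t : W) (ε : ZMod 2) :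
    ((cs.parityPerm i * cs.parityPerm j) ^ k) (t, ε) =
      ((s i * s j) ^ k * t * ((s i * s j) ^ k)⁻¹,
        ε + ∑ r ∈ Finset.range (2 * k), if t = (s j * s i) ^ r * s j then 1 else 0) := by
  induction k generalizing t ε with
  | zero => simp
  | succ k ih =>
    set p := s i * s j
    set q := s j * s i
    have hinv : (p ^ k)⁻¹ = q ^ k := by simp [p, q, ← inv_pow, mul_inv_rev]
    have hsemi : s j * p ^ k = q ^ k * s j := SemiconjBy.pow_right (mul_assoc _ _ _).symm k
    have h₁ : p ^ k * t * (p ^ k)⁻¹ = s j ↔ t = q ^ (2 * k) * s j := by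
      rw [mul_mul_inv_eq_iff_eq_inv_mul_mul, hinv, mul_assoc, hsemi, ← mul_assoc, ← pow_add,
        two_mul]
    have h₂ : s j * (p ^ k * t * (p ^ k)⁻¹) * s j = s i ↔ t = q ^ (2 * k + 1) * s j := by
      rw [simple_mul_mul_simple_eq_iff, mul_mul_inv_eq_iff_eq_inv_mul_mul, hinv,
        show q ^ k * (s j * s i * s j) * p ^ k = q ^ k * q * (s j * p ^ k) by
          simp only [q, mul_assoc], hsemi, ← mul_assoc, ← pow_succ, ← pow_add,
        show k + 1 + k = 2 * k + 1 by ring]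
    rw [pow_succ', Equiv.Perm.mul_apply, ih, Equiv.Perm.mul_apply, parityPerm_apply,
      parityPerm_apply, h₁, h₂, show 2 * (k + 1) = 2 * k + 1 + 1 by ring, Finset.sum_range_succ,
      Finset.sum_range_succ]
    refine Prod.ext ?_ (by simp only; ring)
    simp [p, pow_succ', mul_assoc]

theorem parityPerm_isLiftable : M.IsLiftable cs.parityPerm := by
  intro i j
  refine Equiv.ext fun ⟨t, ε⟩ => ?_
  have hp : (s i * s j) ^ M i j = 1 := cs.simple_mul_simple_pow i j
  have hq : (s j * s i) ^ M i j = 1 := by rw [M.symmetric]; exact cs.simple_mul_simple_pow j i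
  rw [pow_parityPerm_mul_parityPerm_apply, hp, two_mul, Finset.sum_range_add]
  simp [pow_add, hq, CharTwo.add_self_eq_zero]

noncomputable def parityRep : W →* Equiv.Perm (W × ZMod 2) :=
  cs.lift ⟨cs.parityPerm, cs.parityPerm_isLiftable⟩

/-- The parity of the number of occurrences of `t` in the right inversion sequence of any word
for `w`. -/
noncomputable def invParity (w t : W) : ZMod 2 := (cs.parityRep w (t, 0)).2

lemma parityRep_simple (i : B) : cs.parityRep (s i) = cs.parityPerm i :=
  cs.lift_apply_simple cs.parityPerm_isLiftable i

lemma parityRep_apply (w t : W) (ε : ZMod 2) :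
    cs.parityRep w (t, ε) = (w * t * w⁻¹, ε + cs.invParity w t) := by
  induction w using cs.simple_induction_left generalizing ε with
  | one => simp [invParity]
  | mul_simple_left w i ih =>
    have h (ε' : ZMod 2) : cs.parityRep (s i * w) (t, ε') =
        (s i * (w * t * w⁻¹) * s i,
          ε' + cs.invParity w t + if w * t * w⁻¹ = s i then 1 else 0) := by
      rw [map_mul, Equiv.Perm.mul_apply, ih, parityRep_simple, parityPerm_apply]
    rw [h, show cs.invParity (s i * w) t = (cs.parityRep (s i * w) (t, 0)).2 from rfl, h,
      zero_add, add_assoc]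
    simp [mul_assoc]

lemma invParity_one (t : W) : cs.invParity 1 t = 0 := by
  simp [invParity]

lemma invParity_simple (i : B) (t : W) : cs.invParity (s i) t = if t = s i then 1 else 0 := by
  simp [invParity, parityRep_simple, parityPerm_apply]

lemma invParity_mul (w v t : W) :
    cs.invParity (w * v) t = cs.invParity v t + cs.invParity w (v * t * v⁻¹) := by
  rw [invParity, map_mul, Equiv.Perm.mul_apply, parityRep_apply, parityRep_apply, zero_add]

lemma mem_rightInvSeq_of_invParity_eq_one {ω : List B} {t : W} (h : cs.invParity (π ω) t = 1) :
    t ∈ cs.rightInvSeq ω := by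
  induction ω with
  | nil => simp [invParity_one] at h
  | cons i ω ih =>
    rw [wordProd_cons, invParity_mul, invParity_simple] at h
    rw [rightInvSeq, List.mem_cons, ← mul_mul_inv_eq_iff_eq_inv_mul_mul]
    by_cases hi : π ω * t * (π ω)⁻¹ = s i
    · exact .inl hi
    · rw [if_neg hi, add_zero] at h
      exact .inr (ih h)

lemma length_mul_lt_of_invParity_eq_one {w t : W} (h : cs.invParity w t = 1) :
    ℓ (w * t) < ℓ w := by
  obtain ⟨ω, hω, rfl⟩ := cs.exists_isReduced w
  exact (cs.isRightInversion_of_mem_rightInvSeq hω (cs.mem_rightInvSeq_of_invParity_eq_one h)).2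

lemma invParity_self {t : W} (ht : cs.IsReflection t) : cs.invParity t t = 1 := by
  obtain ⟨w, i, rfl⟩ := ht
  have h₁ := cs.invParity_mul (w * s i) w⁻¹ (w * s i * w⁻¹)
  have h₂ := cs.invParity_mul w (s i) (s i)
  have h₃ := cs.invParity_mul w w⁻¹ (w * s i * w⁻¹)
  have hconj : w⁻¹ * (w * s i * w⁻¹) * w = s i := by group
  simp only [inv_inv, mul_inv_cancel, mul_inv_cancel_right, hconj, invParity_one,
    invParity_simple, if_pos] at h₁ h₂ h₃
  linear_combination h₁ + h₂ - h₃

lemma invParity_mul_self {t : W} (ht : cs.IsReflection t) (w : W) :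
    cs.invParity (w * t) t = cs.invParity w t + 1 := by
  have h := cs.invParity_mul (w * t) t t
  simp only [ht.inv, mul_assoc, ht.mul_self, mul_one, one_mul, invParity_self cs ht] at h
  rw [h, add_comm 1, add_assoc, CharTwo.add_self_eq_zero, add_zero]

lemma invParity_eq_one_iff {w t : W} (ht : cs.IsReflection t) :
    cs.invParity w t = 1 ↔ ℓ (w * t) < ℓ w := by
  refine ⟨cs.length_mul_lt_of_invParity_eq_one, fun hlt => ?_⟩
  by_contra hne
  have := cs.length_mul_lt_of_invParity_eq_one (t := t) (w := w * t) <| by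
    rw [invParity_mul_self cs ht, (ZMod.eq_zero_iff_ne_one_of_two _).mpr hne, zero_add]
  rw [mul_assoc, ht.mul_self, mul_one] at this
  omega

lemma invParity_eq_zero_iff {w t : W} (ht : cs.IsReflection t) :
    cs.invParity w t = 0 ↔ ℓ w < ℓ (w * t) := by
  rw [ZMod.eq_zero_iff_ne_one_of_two, ne_eq, cs.invParity_eq_one_iff ht, not_lt]
  exact ⟨fun h => h.lt_of_ne (ht.length_mul_left_ne w).symm, le_of_lt⟩

theorem exists_wordProd_mul_eq_wordProd_eraseIdx {ω : List B} {t : W} (ht : cs.IsReflection t)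
    (hlt : ℓ (π ω * t) < ℓ (π ω)) : ∃ j < ω.length, π ω * t = π (ω.eraseIdx j) := by
  obtain ⟨j, hj, hget⟩ := List.mem_iff_getElem.mp
    (cs.mem_rightInvSeq_of_invParity_eq_one ((cs.invParity_eq_one_iff ht).mpr hlt))
  rw [length_rightInvSeq] at hj
  refine ⟨j, hj, ?_⟩
  rw [← hget, ← List.getD_eq_getElem _ 1, wordProd_mul_getD_rightInvSeq]

end ReflectionCocycle

lemma parab_mono {K L : Set B} (h : K ⊆ L) : parab cs K ≤ parab cs L :=
  Subgroup.closure_mono (Set.image_mono h)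

lemma simple_mem_parab {K : Set B} {i : B} (hi : i ∈ K) : s i ∈ parab cs K :=
  Subgroup.subset_closure ⟨i, hi, rfl⟩

lemma wordProd_mem_parab {K : Set B} {ω : List B} (h : ∀ i ∈ ω, i ∈ K) : π ω ∈ parab cs K :=
  Subgroup.list_prod_mem _ (by simpa using fun i hi => cs.simple_mem_parab (h i hi))

lemma exists_isReduced_of_mem_parab {K : Set B} {w : W} (hw : w ∈ parab cs K) :
    ∃ ω : List B, cs.IsReduced ω ∧ (∀ i ∈ ω, i ∈ K) ∧ w = π ω := by
  have step {w : W} {i : B} (hi : i ∈ K) :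
      (∃ ω : List B, cs.IsReduced ω ∧ (∀ i ∈ ω, i ∈ K) ∧ w = π ω) →
        ∃ ω : List B, cs.IsReduced ω ∧ (∀ i ∈ ω, i ∈ K) ∧ w * s i = π ω := by
    rintro ⟨ω, hω, hK, rfl⟩
    rcases cs.length_mul_simple (π ω) i with hlen | hlen
    · refine ⟨ω ++ [i], ?_, ?_, by rw [wordProd_append, wordProd_singleton]⟩
      · rw [IsReduced, wordProd_append, wordProd_singleton, hlen, hω.eq, List.length_append,
          List.length_singleton]
      · simpa [or_imp, forall_and] using ⟨hK, hi⟩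
    · obtain ⟨j, hj, he⟩ :=
        cs.exists_wordProd_mul_eq_wordProd_eraseIdx (ω := ω) (cs.isReflection_simple i) (by omega)
      refine ⟨ω.eraseIdx j, ?_, fun k hk => hK k (List.eraseIdx_subset hk), he⟩
      rw [IsReduced, ← he, List.length_eraseIdx_of_lt hj]
      have := hω.eq
      omega
  induction hw using Subgroup.closure_induction_right with
  | one => exact ⟨[], by simp [IsReduced], by simp, rfl⟩
  | mul_right w _ _ hy ih =>
    obtain ⟨i, hi, rfl⟩ := hy
    exact step hi ih
  | mul_inv_cancel w _ _ hy ih =>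
    obtain ⟨i, hi, rfl⟩ := hy
    rw [inv_simple]
    exact step hi ih

lemma simple_mem_parab_iff {K : Set B} {i : B} : s i ∈ parab cs K ↔ i ∈ K := by
  refine ⟨fun h => ?_, cs.simple_mem_parab⟩
  obtain ⟨ω, hω, hK, hi⟩ := cs.exists_isReduced_of_mem_parab h
  obtain ⟨j, rfl⟩ : ∃ j, ω = [j] := by
    rw [← List.length_eq_one_iff, ← hω.eq, ← hi, length_simple]
  rw [wordProd_singleton] at hi
  rw [cs.simple_injective hi]
  exact hK j (List.mem_singleton_self j)

lemma mem_of_length_mul_simple_lt {K : Set B} {w : W} {i : B} (hw : w ∈ parab cs K)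
    (hlt : ℓ (w * s i) < ℓ w) : i ∈ K := by
  obtain ⟨ω, -, hK, rfl⟩ := cs.exists_isReduced_of_mem_parab hw
  obtain ⟨j, -, he⟩ := cs.exists_wordProd_mul_eq_wordProd_eraseIdx (cs.isReflection_simple i) hlt
  rw [← cs.simple_mem_parab_iff, show s i = (π ω)⁻¹ * π (ω.eraseIdx j) by rw [← he]; group]
  exact mul_mem (inv_mem hw) (cs.wordProd_mem_parab fun k hk => hK k (List.eraseIdx_subset hk))

theorem _root_.Cox.IsLongest.length_mul_lt {K : Set B} {x t : W} (hx : IsLongest cs K x)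
    (ht : cs.IsReflection t) (htK : t ∈ parab cs K) : ℓ (x * t) < ℓ x :=
  (hx.2 _ (mul_mem hx.1 htK)).lt_of_ne (ht.length_mul_left_ne x)

section MinimalCosetRepresentative

variable {K : Set B} {u : W}

lemma length_mul_simple_of_forall_length_le (hmin : ∀ z ∈ parab cs K, ℓ u ≤ ℓ (u * z))
    {v : W} (hv : v ∈ parab cs K) {i : B} (hi : i ∈ K) (hvi : ℓ v < ℓ (v * s i)) :
    ℓ (u * v) < ℓ (u * v * s i) := by
  have hrefl := cs.isReflection_simple i
  by_contra! hle
  have hη : cs.invParity (u * v) (s i) = 1 :=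
    (cs.invParity_eq_one_iff hrefl).mpr (hle.lt_of_ne (cs.length_mul_simple_ne _ i))
  rw [invParity_mul, (cs.invParity_eq_zero_iff hrefl).mpr hvi, zero_add,
    invParity_eq_one_iff cs (hrefl.conj v)] at hη
  have := hmin _ (mul_mem (mul_mem hv (cs.simple_mem_parab hi)) (inv_mem hv))
  omega

lemma length_mul_of_forall_length_le (hmin : ∀ z ∈ parab cs K, ℓ u ≤ ℓ (u * z)) {v : W}
    (hv : v ∈ parab cs K) : ℓ (u * v) = ℓ u + ℓ v := by
  induction hn : ℓ v generalizing v with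
  | zero => rw [cs.length_eq_zero_iff.mp hn, mul_one, add_zero]
  | succ n ih =>
    obtain ⟨i, hi⟩ := cs.exists_rightDescent_of_ne_one (w := v) (by rintro rfl; simp at hn)
    have hiK := cs.mem_of_length_mul_simple_lt hv hi
    have hvi : ℓ (v * s i) = n := by have := cs.isRightDescent_iff.mp hi; omega
    have hvi_mem : v * s i ∈ parab cs K := mul_mem hv (cs.simple_mem_parab hiK)
    have e : u * (v * s i) * s i = u * v := by rw [mul_assoc, simple_mul_simple_cancel_right]
    have hlt := cs.length_mul_simple_of_forall_length_le hmin hvi_mem hiK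
      (by rw [simple_mul_simple_cancel_right]; omega)
    have := cs.length_mul_simple (u * (v * s i)) i
    rw [e, ih hvi_mem hvi] at hlt this
    omega

theorem length_mul_of_inQuot (hu : InQuot cs K u) {v : W} (hv : v ∈ parab cs K) :
    ℓ (u * v) = ℓ u + ℓ v := by
  obtain ⟨z, hz, hmin⟩ := (InvImage.wf (fun z => ℓ (u * z)) wellFounded_lt).has_min
    (parab cs K) ⟨1, one_mem _⟩
  have hmin' : ∀ y ∈ parab cs K, ℓ (u * z) ≤ ℓ (u * z * y) := fun y hy =>
    not_lt.mp (by simpa [InvImage, mul_assoc] using hmin _ (mul_mem hz hy))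
  obtain rfl : z = 1 := by
    by_contra hz1
    obtain ⟨i, hi⟩ := cs.exists_rightDescent_of_ne_one (inv_ne_one.mpr hz1)
    have hiK := cs.mem_of_length_mul_simple_lt (inv_mem hz) hi
    have h₁ := cs.length_mul_of_forall_length_le hmin' (inv_mem hz)
    have h₂ := cs.length_mul_of_forall_length_le hmin'
      (mul_mem (inv_mem hz) (cs.simple_mem_parab hiK))
    simp only [mul_inv_cancel_right, ← mul_assoc] at h₁ h₂
    have := hu i hiK
    unfold IsRightDescent at hi
    omega
  simpa using cs.length_mul_of_forall_length_le hmin' hv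

end MinimalCosetRepresentative

theorem inQuot_longest_mul_longest {J L : Set B} {wJ wI : W} (hJ : IsLongest cs J wJ)
    (hI : IsLongest cs (J ∩ L) wI) : InQuot cs L (wJ * wI) := by
  have hIJ : parab cs (J ∩ L) ≤ parab cs J := cs.parab_mono Set.inter_subset_left
  intro i hiL
  by_contra! hle
  have hlt := hle.lt_of_ne (cs.length_mul_simple_ne _ i)
  have hsi : s i ∈ parab cs (J ∩ L) := cs.simple_mem_parab
    ⟨cs.mem_of_length_mul_simple_lt (mul_mem hJ.1 (hIJ hI.1)) hlt, hiL⟩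
  have hrefl := cs.isReflection_simple i
  have hη := cs.invParity_mul wJ wI (s i)
  have hconj : wI * s i * wI⁻¹ ∈ parab cs J :=
    mul_mem (mul_mem (hIJ hI.1) (hIJ hsi)) (inv_mem (hIJ hI.1))
  rw [(cs.invParity_eq_one_iff hrefl).mpr hlt,
    (cs.invParity_eq_one_iff hrefl).mpr (hI.length_mul_lt cs hrefl hsi),
    (cs.invParity_eq_one_iff (hrefl.conj wI)).mpr (hJ.length_mul_lt cs (hrefl.conj wI) hconj)] at hη
  exact absurd hη (by decide)

end CoxeterSystem

theorem stmt6_general {B W : Type*} [Group W] {M : CoxeterMatrix B}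
    (cs : CoxeterSystem M W) (J Jp : Set B) (wJ wI wJp : W)
    (hJ : IsLongest cs J wJ) (hI : IsLongest cs (J ∩ Jp) wI) (hJp : IsLongest cs Jp wJp) :
    InQuot cs Jp (wJ * wI) ∧ wJp ∈ parab cs Jp ∧
      cs.length (wJ * wI * wJp) = cs.length (wJ * wI) + cs.length wJp := by
  have hquot := cs.inQuot_longest_mul_longest hJ hI
  exact ⟨hquot, hJp.1, cs.length_mul_of_inQuot hquot hJp.1⟩

theorem stmt6 {B W : Type*} [Group W] [Finite W] {M : CoxeterMatrix B}
    (cs : CoxeterSystem M W) (J Jp : Set B) (wJ wI wJp : W)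
    (hJ : IsLongest cs J wJ) (hI : IsLongest cs (J ∩ Jp) wI) (hJp : IsLongest cs Jp wJp) :
    InQuot cs Jp (wJ * wI) ∧ wJp ∈ parab cs Jp ∧
      cs.length (wJ * wI * wJp) = cs.length (wJ * wI) + cs.length wJp :=
  stmt6_general cs J Jp wJ wI wJp hJ hI hJp
end
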